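/- arXiv:2409.02670 — 4 statements merged into one kernel-verified Lean document; each statement's English description precedes it below -/
import Mathlib

section
/- Let p > 1 and let f : [1, ∞) → [0, ∞) be continuous. Assume there exist constants C₀ > 0, C₁ > 0, C₂ ≥ 0, C₃ ≥ 0 such that for all 1 ≤ x₁ < x₂ one has f(x₂) + C₁·∫_{x₁}^{x₂} f(x) dx ≤ C₀·f(x₁) + C₂·∫_{x₁}^{x₂} x^{−p} dx + C₃·x₁^{−p}. Then there exists a constant C > 0 (depending only on f(1), C₀, C₁, C₂, C₃ and p) such that f(x₁) ≤ C·x₁^{−p} for every x₁ ≥ 1. -/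
open MeasureTheory

private lemma aux_int_lb (f : ℝ → ℝ) {a b c : ℝ} (hab : a ≤ b)
    (hint : IntervalIntegrable f volume a b)
    (hc : ∀ x ∈ Set.Icc a b, c ≤ f x) : (b - a) * c ≤ ∫ x in a..b, f x := by
  simpa using intervalIntegral.integral_mono_on hab
    (_root_.intervalIntegrable_const (c := c)) hint hc

private lemma aux_rpow_intble (p a b : ℝ) (ha : 0 < a) (hab : a ≤ b) :
    IntervalIntegrable (fun x : ℝ => x ^ (-p)) volume a b := by
  apply ContinuousOn.intervalIntegrable
  apply ContinuousOn.rpow_const continuousOn_id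
  intro x hx
  rw [Set.uIcc_of_le hab] at hx
  exact Or.inl (ne_of_gt (lt_of_lt_of_le ha hx.1))

private lemma aux_rpow_int_ub (p a b : ℝ) (hp : 0 < p) (ha : 0 < a) (hab : a ≤ b) :
    (∫ x in a..b, x ^ (-p)) ≤ (b - a) * a ^ (-p) := by
  have := intervalIntegral.integral_mono_on hab (aux_rpow_intble p a b ha hab)
    (_root_.intervalIntegrable_const (c := a ^ (-p)))
    (fun x hx => Real.rpow_le_rpow_of_nonpos ha hx.1 (by linarith))
  simpa [mul_comm] using this

private lemma aux_rpow_int_one (p b : ℝ) (hp : 1 < p) (hb : 1 ≤ b) :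
    (∫ x in (1:ℝ)..b, x ^ (-p)) ≤ 1 / (p - 1) := by
  rw [integral_rpow (Or.inr ⟨by intro h; rw [neg_eq_iff_eq_neg] at h; linarith,
      by rw [Set.uIcc_of_le hb]; intro h; exact absurd h.1 (by norm_num)⟩)]
  have h1 : (0:ℝ) < p - 1 := by linarith
  have hbpos : (0:ℝ) < b := by linarith
  have h2 : (0:ℝ) ≤ b ^ (-p + 1) := Real.rpow_nonneg (le_of_lt hbpos) _
  rw [Real.one_rpow]
  have heq : (b ^ (-p+1) - 1)/(-p+1) = (1 - b ^ (-p+1))/(p-1) := by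
    rw [div_eq_div_iff (by linarith) (by linarith)]; ring
  rw [heq]
  gcongr
  linarith

/-- transfer a power inequality to negative powers -/
private lemma aux_transfer2 {x y c d q : ℝ} (hx : 0 < x) (hy : 0 < y)
    (h : c * y ^ q ≤ d * x ^ q) : c * x ^ (-q) ≤ d * y ^ (-q) := by
  have hA : 0 < x ^ q := Real.rpow_pos_of_pos hx q
  have hB : 0 < y ^ q := Real.rpow_pos_of_pos hy q
  rw [Real.rpow_neg hx.le, Real.rpow_neg hy.le, inv_eq_one_div, inv_eq_one_div,
    mul_one_div, mul_one_div, div_le_div_iff₀ hA hB]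
  linarith

set_option maxHeartbeats 1000000 in
/-- **Lemma 3.4 of Ma–Zhang (α = 0).**
Let `p > 1` and let `f : [1, ∞) → [0, ∞)` be continuous. Assume there are constants
`C₀ > 0`, `C₁ > 0`, `C₂ ≥ 0`, `C₃ ≥ 0` such that for all `1 ≤ x₁ < x₂`,
`f x₂ + C₁ ∫_{x₁}^{x₂} f ≤ C₀ f x₁ + C₂ ∫_{x₁}^{x₂} x^(−p) dx + C₃ x₁^(−p)`.
Then there is `C > 0` with `f x₁ ≤ C x₁^(−p)` for all `x₁ ≥ 1`. -/
theorem stmt_0 (p : ℝ) (hp : 1 < p) (f : ℝ → ℝ)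
    (hf_cont : ContinuousOn f (Set.Ici (1 : ℝ)))
    (hf_nonneg : ∀ x ∈ Set.Ici (1 : ℝ), 0 ≤ f x)
    (C₀ C₁ C₂ C₃ : ℝ) (hC₀ : 0 < C₀) (hC₁ : 0 < C₁) (hC₂ : 0 ≤ C₂) (hC₃ : 0 ≤ C₃)
    (h : ∀ x₁ x₂ : ℝ, 1 ≤ x₁ → x₁ < x₂ →
      f x₂ + C₁ * (∫ x in x₁..x₂, f x) ≤
        C₀ * f x₁ + C₂ * (∫ x in x₁..x₂, x ^ (-p)) + C₃ * x₁ ^ (-p)) :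
    ∃ C > 0, ∀ x₁ : ℝ, 1 ≤ x₁ → f x₁ ≤ C * x₁ ^ (-p) := by
  have hp0 : 0 < p := by linarith
  -- interval integrability of f
  have hfint : ∀ a b : ℝ, 1 ≤ a → a ≤ b → IntervalIntegrable f volume a b := by
    intro a b ha hab
    apply ContinuousOn.intervalIntegrable
    apply hf_cont.mono
    rw [Set.uIcc_of_le hab]
    intro x hx
    exact le_trans ha hx.1
  -- global bound M
  set M : ℝ := f 1 + C₀ * f 1 + C₂ / (p - 1) + C₃ with hMdef
  have hf1 : 0 ≤ f 1 := hf_nonneg 1 (Set.mem_Ici.mpr le_rfl)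
  have hMnn : 0 ≤ M := by
    have h1 : 0 ≤ C₂ / (p - 1) := div_nonneg hC₂ (by linarith)
    have h2 : 0 ≤ C₀ * f 1 := mul_nonneg hC₀.le hf1
    rw [hMdef]; linarith
  have hglobal : ∀ y : ℝ, 1 ≤ y → f y ≤ M := by
    intro y hy
    rcases hy.eq_or_lt with rfl | hy1
    · have h2 : 0 ≤ C₀ * f 1 := mul_nonneg hC₀.le hf1
      have h1 : 0 ≤ C₂ / (p - 1) := div_nonneg hC₂ (by linarith)
      rw [hMdef]; linarith
    · have hh := h 1 y le_rfl hy1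
      have hint1 : 0 ≤ ∫ x in (1:ℝ)..y, f x :=
        intervalIntegral.integral_nonneg hy (fun x hx => hf_nonneg x hx.1)
      have hint2 : (∫ x in (1:ℝ)..y, x ^ (-p)) ≤ 1/(p-1) := aux_rpow_int_one p y hp hy
      rw [Real.one_rpow] at hh
      have e1 : C₂ * (∫ x in (1:ℝ)..y, x ^ (-p)) ≤ C₂ * (1/(p-1)) :=
        mul_le_mul_of_nonneg_left hint2 hC₂
      have e2 : C₂ * (1/(p-1)) = C₂/(p-1) := by ring
      have e3 : 0 ≤ C₁ * ∫ x in (1:ℝ)..y, f x := mul_nonneg hC₁.le hint1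
      rw [hMdef]; linarith
  -- block length L and block endpoints a n
  set L : ℝ := max 1 (4 * C₀ / C₁) with hLdef
  have hL1 : (1:ℝ) ≤ L := le_max_left _ _
  have hL0 : (0:ℝ) < L := by linarith
  have hLC : 4 * C₀ ≤ C₁ * L := by
    have h1 : 4 * C₀ / C₁ ≤ L := le_max_right _ _
    calc 4 * C₀ = C₁ * (4 * C₀ / C₁) := by field_simp
    _ ≤ C₁ * L := mul_le_mul_of_nonneg_left h1 hC₁.le
  set a : ℕ → ℝ := fun n => 1 + n * L with hadef
  have ha1 : ∀ n : ℕ, (1:ℝ) ≤ a n := by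
    intro n
    have : (0:ℝ) ≤ n * L := mul_nonneg (Nat.cast_nonneg n) hL0.le
    simp only [hadef]; linarith
  have ha0 : ∀ n : ℕ, (0:ℝ) < a n := fun n => lt_of_lt_of_le one_pos (ha1 n)
  have hastep : ∀ n : ℕ, a (n+1) = a n + L := by
    intro n; simp only [hadef]; push_cast; ring
  have hastep2 : ∀ n : ℕ, a (n+2) = a n + 2 * L := by
    intro n; rw [hastep (n+1), hastep n]; ring
  -- minimum points on blocks
  have hxi : ∀ n : ℕ, ∃ ξ ∈ Set.Icc (a n) (a (n+1)), ∀ y ∈ Set.Icc (a n) (a (n+1)), f ξ ≤ f y := by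
    intro n
    have hcc : ContinuousOn f (Set.Icc (a n) (a (n+1))) :=
      hf_cont.mono (fun x hx => le_trans (ha1 n) hx.1)
    have hne : (Set.Icc (a n) (a (n+1))).Nonempty :=
      Set.nonempty_Icc.mpr (by rw [hastep]; linarith)
    obtain ⟨ξ, hξ, hmin⟩ := isCompact_Icc.exists_isMinOn hne hcc
    exact ⟨ξ, hξ, fun y hy => hmin hy⟩
  choose ξ hξmem hξmin using hxi
  have hξ1 : ∀ n : ℕ, 1 ≤ ξ n := fun n => le_trans (ha1 n) (hξmem n).1
  -- the recursion
  set K : ℝ := 2 * L * C₂ + C₃ with hKdef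
  have hKnn : 0 ≤ K := by
    have : 0 ≤ 2 * L * C₂ := by positivity
    rw [hKdef]; linarith
  have hrec : ∀ n : ℕ, C₁ * L * f (ξ (n+1)) ≤ C₀ * f (ξ n) + K * (a n) ^ (-p) := by
    intro n
    have hlt : ξ n < a (n+2) := lt_of_le_of_lt (hξmem n).2 (by rw [hastep (n+1)]; linarith)
    have hh := h (ξ n) (a (n+2)) (hξ1 n) hlt
    have hsplit : (∫ x in (ξ n)..(a (n+2)), f x) =
        (∫ x in (ξ n)..(a (n+1)), f x) + ∫ x in (a (n+1))..(a (n+2)), f x :=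
      (intervalIntegral.integral_add_adjacent_intervals
        (hfint _ _ (hξ1 n) (hξmem n).2)
        (hfint _ _ (ha1 _) (by rw [hastep (n+1)]; linarith))).symm
    have hnn1 : 0 ≤ ∫ x in (ξ n)..(a (n+1)), f x :=
      intervalIntegral.integral_nonneg (hξmem n).2
        (fun x hx => hf_nonneg x (le_trans (hξ1 n) hx.1))
    have hlb : L * f (ξ (n+1)) ≤ ∫ x in (a (n+1))..(a (n+2)), f x := by
      have hle : a (n+1) ≤ a (n+2) := by rw [hastep (n+1)]; linarith
      have h1 := aux_int_lb f hle (hfint _ _ (ha1 _) hle) (fun y hy => hξmin (n+1) y hy)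
      have hdiff : a (n+2) - a (n+1) = L := by rw [hastep (n+1)]; ring
      rw [hdiff] at h1
      exact h1
    have h3 : (ξ n) ^ (-p) ≤ (a n) ^ (-p) :=
      Real.rpow_le_rpow_of_nonpos (ha0 n) (hξmem n).1 (by linarith)
    have hub : (∫ x in (ξ n)..(a (n+2)), x ^ (-p)) ≤ 2 * L * (a n) ^ (-p) := by
      have h2 := aux_rpow_int_ub p (ξ n) (a (n+2)) hp0 (by linarith [hξ1 n]) hlt.le
      have h4 : a (n+2) - ξ n ≤ 2 * L := by
        have h5 := (hξmem n).1
        rw [hastep2 n]; linarith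
      calc (∫ x in (ξ n)..(a (n+2)), x ^ (-p)) ≤ (a (n+2) - ξ n) * (ξ n) ^ (-p) := h2
      _ ≤ 2 * L * (a n) ^ (-p) :=
          mul_le_mul h4 h3 (Real.rpow_nonneg (by linarith [hξ1 n]) _) (by linarith)
    have hf2 : 0 ≤ f (a (n+2)) := hf_nonneg _ (ha1 _)
    rw [hsplit] at hh
    have t1 : C₁ * L * f (ξ (n+1)) ≤ C₁ * ∫ x in (a (n+1))..(a (n+2)), f x := by
      have h6 := mul_le_mul_of_nonneg_left hlb hC₁.le
      calc C₁ * L * f (ξ (n+1)) = C₁ * (L * f (ξ (n+1))) := by ring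
      _ ≤ _ := h6
    have t2 : C₂ * (∫ x in (ξ n)..(a (n+2)), x ^ (-p)) ≤ C₂ * (2 * L * (a n) ^ (-p)) :=
      mul_le_mul_of_nonneg_left hub hC₂
    have t3 : C₃ * (ξ n) ^ (-p) ≤ C₃ * (a n) ^ (-p) := mul_le_mul_of_nonneg_left h3 hC₃
    have t4 : 0 ≤ C₁ * ∫ x in (ξ n)..(a (n+1)), f x := mul_nonneg hC₁.le hnn1
    have hKeq : K * (a n) ^ (-p) = C₂ * (2 * L * (a n) ^ (-p)) + C₃ * (a n) ^ (-p) := by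
      rw [hKdef]; ring
    linarith
  -- choose the threshold N₁
  have hδ : (0:ℝ) < 2 ^ (1/p) - 1 := by
    have h1 : (1:ℝ) < 2 ^ (1/p) := by
      have h0 := Real.rpow_lt_rpow_of_exponent_lt (x := 2) one_lt_two
        (show (0:ℝ) < 1/p from one_div_pos.mpr hp0)
      simpa using h0
    linarith
  obtain ⟨N, hN⟩ := exists_nat_gt (1 / ((2:ℝ) ^ (1/p) - 1))
  set N₁ : ℕ := N + 1 with hN₁def
  -- growth control for n ≥ N₁
  have hgrow : ∀ n : ℕ, N₁ ≤ n → (a (n+1)) ^ p ≤ 2 * (a n) ^ p := by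
    intro n hn
    have hn1 : 1 ≤ n := le_trans (by omega) hn
    have hnpos : (0:ℝ) < n := by exact_mod_cast Nat.lt_of_lt_of_le Nat.zero_lt_one hn1
    have hn' : 1 / ((2:ℝ) ^ (1/p) - 1) < n := by
      have hNn : (N:ℝ) ≤ n := by exact_mod_cast le_trans (by omega : N ≤ N₁) hn
      linarith
    have hd : 1 + 1/(n:ℝ) < 2 ^ (1/p) := by
      have h2 : 1/(n:ℝ) < 2 ^ (1/p) - 1 := by
        have h2a : 1 < (n:ℝ) * (2 ^ (1/p) - 1) := (div_lt_iff₀ hδ).mp hn'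
        rw [div_lt_iff₀ hnpos]
        nlinarith [h2a]
      linarith
    have hstep : a (n+1) ≤ a n * 2 ^ (1/p) := by
      have e2 : a n * (1 + 1/(n:ℝ)) = a n + 1/(n:ℝ) + L := by
        simp only [hadef]
        field_simp
        ring
      have e1 : a n * (1 + 1/(n:ℝ)) ≤ a n * 2 ^ (1/p) :=
        mul_le_mul_of_nonneg_left hd.le (ha0 n).le
      have e3 : (0:ℝ) < 1/(n:ℝ) := by positivity
      rw [hastep n]
      linarith
    calc (a (n+1)) ^ p ≤ (a n * 2 ^ (1/p)) ^ p :=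
          Real.rpow_le_rpow (ha0 (n+1)).le hstep hp0.le
    _ = (a n) ^ p * ((2:ℝ) ^ (1/p)) ^ p := Real.mul_rpow (ha0 n).le (by positivity)
    _ = (a n) ^ p * 2 := by
        rw [← Real.rpow_mul (by norm_num : (0:ℝ) ≤ 2), one_div_mul_cancel (ne_of_gt hp0),
          Real.rpow_one]
    _ = 2 * (a n) ^ p := by ring
  -- the decay constant
  set Cs : ℝ := K / C₀ + M * (a N₁) ^ p + 1 with hCsdef
  have haN1p : (0:ℝ) ≤ (a N₁) ^ p := Real.rpow_nonneg (ha0 _).le _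
  have hCsK : K ≤ C₀ * Cs := by
    have h1 : 0 ≤ M * (a N₁) ^ p := mul_nonneg hMnn haN1p
    have h3 : C₀ * Cs = K + C₀ * (M * (a N₁) ^ p) + C₀ := by
      rw [hCsdef]; field_simp
    nlinarith [mul_nonneg hC₀.le h1]
  have hCspos : 0 < Cs := by
    have h1 : 0 ≤ M * (a N₁) ^ p := mul_nonneg hMnn haN1p
    have h2 : 0 ≤ K / C₀ := div_nonneg hKnn hC₀.le
    rw [hCsdef]; linarith
  -- decay of the minima by induction
  have hind : ∀ n, N₁ ≤ n → f (ξ n) ≤ Cs * (a n) ^ (-p) := by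
    intro n hn
    induction n, hn using Nat.le_induction with
    | base =>
        have h1 : f (ξ N₁) ≤ M := hglobal _ (hξ1 N₁)
        have h2 : M * (a N₁) ^ p ≤ Cs * (1:ℝ) ^ p := by
          rw [Real.one_rpow, mul_one]
          have h4 : 0 ≤ K / C₀ := div_nonneg hKnn hC₀.le
          rw [hCsdef]; linarith
        have h6 := aux_transfer2 one_pos (ha0 N₁) h2
        rw [Real.one_rpow, mul_one] at h6
        linarith
    | succ n hn ih =>
        have hr := hrec n
        have t1 : C₀ * f (ξ n) ≤ C₀ * (Cs * (a n) ^ (-p)) := mul_le_mul_of_nonneg_left ih hC₀.le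
        have key : (C₀ * Cs + K) * (a n) ^ (-p) ≤ C₁ * L * Cs * (a (n+1)) ^ (-p) := by
          apply aux_transfer2 (ha0 n) (ha0 (n+1))
          have hg := hgrow n hn
          have hcnn : 0 ≤ C₀ * Cs + K := add_nonneg (mul_nonneg hC₀.le hCspos.le) hKnn
          calc (C₀ * Cs + K) * (a (n+1)) ^ p ≤ (C₀ * Cs + K) * (2 * (a n) ^ p) :=
                mul_le_mul_of_nonneg_left hg hcnn
          _ ≤ C₁ * L * Cs * (a n) ^ p := by
              have hpow : 0 ≤ (a n) ^ p := Real.rpow_nonneg (ha0 n).le _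
              have h2c : 2 * (C₀ * Cs + K) ≤ C₁ * L * Cs := by
                linarith [mul_le_mul_of_nonneg_right hLC hCspos.le]
              linarith [mul_le_mul_of_nonneg_right h2c hpow]
        have hfin : C₁ * L * f (ξ (n+1)) ≤ C₁ * L * (Cs * (a (n+1)) ^ (-p)) := by
          calc C₁ * L * f (ξ (n+1)) ≤ C₀ * (Cs * (a n) ^ (-p)) + K * (a n) ^ (-p) := by linarith
          _ = (C₀ * Cs + K) * (a n) ^ (-p) := by ring
          _ ≤ C₁ * L * Cs * (a (n+1)) ^ (-p) := key
          _ = C₁ * L * (Cs * (a (n+1)) ^ (-p)) := by ring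
        have hCL : 0 < C₁ * L := by positivity
        exact le_of_mul_le_mul_left (by linarith) hCL
  -- final constant
  set B : ℝ := (C₀ * Cs + K + Cs) * (1 + 2*L) ^ p with hBdef
  have h2Lp : (0:ℝ) ≤ (1 + 2*L) ^ p := Real.rpow_nonneg (by linarith) _
  have hBnn : 0 ≤ B := by
    have h2 : 0 ≤ C₀ * Cs + K + Cs :=
      add_nonneg (add_nonneg (mul_nonneg hC₀.le hCspos.le) hKnn) hCspos.le
    rw [hBdef]; exact mul_nonneg h2 h2Lp
  set Cf : ℝ := B + M * (a (N₁+1)) ^ p + 1 with hCfdef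
  have hMaNnn : 0 ≤ M * (a (N₁+1)) ^ p := mul_nonneg hMnn (Real.rpow_nonneg (ha0 _).le _)
  refine ⟨Cf, by rw [hCfdef]; linarith, ?_⟩
  intro y hy
  have hypos : (0:ℝ) < y := by linarith
  have hynegpow : (0:ℝ) < y ^ (-p) := Real.rpow_pos_of_pos hypos _
  rcases le_or_gt y (a (N₁+1)) with hcase | hcase
  · -- initial region
    have h1 : f y ≤ M := hglobal y hy
    have h2 : M ≤ M * (a (N₁+1)) ^ p * y ^ (-p) := by
      have h3 : M * y ^ p ≤ (M * (a (N₁+1)) ^ p) * (1:ℝ) ^ p := by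
        rw [Real.one_rpow, mul_one]
        exact mul_le_mul_of_nonneg_left (Real.rpow_le_rpow hypos.le hcase hp0.le) hMnn
      have h4 := aux_transfer2 one_pos hypos h3
      rw [Real.one_rpow, mul_one] at h4
      exact h4
    have h5 : M * (a (N₁+1)) ^ p * y ^ (-p) ≤ Cf * y ^ (-p) := by
      apply mul_le_mul_of_nonneg_right _ hynegpow.le
      rw [hCfdef]; linarith
    linarith
  · -- decay region
    set k : ℕ := ⌊(y - 1)/L⌋₊ with hkdef
    have hyN : a (N₁+1) ≤ y := hcase.le
    have hk1 : N₁ + 1 ≤ k := by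
      apply Nat.le_floor
      rw [le_div_iff₀ hL0]
      have he : a (N₁+1) = 1 + ((N₁:ℝ)+1) * L := by simp only [hadef]; push_cast; ring
      rw [he, hN₁def] at hyN
      push_cast at hyN ⊢
      linarith
    have hky : a k ≤ y := by
      have h1 : (k:ℝ) ≤ (y-1)/L := Nat.floor_le (div_nonneg (by linarith) hL0.le)
      have h2 : (k:ℝ) * L ≤ y - 1 := (le_div_iff₀ hL0).mp h1
      simp only [hadef]; linarith
    have hky2 : y < a (k+1) := by
      have h1 : (y-1)/L < (k:ℝ) + 1 := Nat.lt_floor_add_one _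
      have h2 : y - 1 < ((k:ℝ) + 1) * L := by
        rw [div_lt_iff₀ hL0] at h1
        linarith
      simp only [hadef]; push_cast; linarith
    obtain ⟨n, hn, hkeq⟩ : ∃ n, N₁ ≤ n ∧ k = n + 1 := ⟨k - 1, by omega, by omega⟩
    rw [hkeq] at hky hky2
    -- y ∈ [a (n+1), a (n+2))
    have hyl : a (n+1) ≤ y := hky
    have hyu : y < a (n+2) := by
      have hnn : n + 2 = (n + 1) + 1 := by omega
      rw [hnn]; exact hky2
    have hξy : ξ n ≤ y := le_trans (hξmem n).2 hyl
    -- the pow comparison: y^p ≤ (1+2L)^p * (a n)^p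
    have hypow : y ^ p ≤ (1 + 2*L) ^ p * (a n) ^ p := by
      have h1 : y ≤ (1 + 2*L) * a n := by
        have h2 := hastep2 n
        have h3 := ha1 n
        nlinarith [mul_le_mul_of_nonneg_left h3 (by linarith : (0:ℝ) ≤ 2*L)]
      calc y ^ p ≤ ((1 + 2*L) * a n) ^ p := Real.rpow_le_rpow hypos.le h1 hp0.le
      _ = (1 + 2*L) ^ p * (a n) ^ p := Real.mul_rpow (by linarith) (ha0 n).le
    have hmain : f y ≤ (C₀ * Cs + K) * (a n) ^ (-p) ∨ f y ≤ Cs * (a n) ^ (-p) := by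
      rcases hξy.eq_or_lt with heq | hlt
      · right; rw [← heq]; exact hind n hn
      · left
        have hh := h (ξ n) y (hξ1 n) hlt
        have t1 : C₀ * f (ξ n) ≤ C₀ * (Cs * (a n) ^ (-p)) :=
          mul_le_mul_of_nonneg_left (hind n hn) hC₀.le
        have h3 : (ξ n) ^ (-p) ≤ (a n) ^ (-p) :=
          Real.rpow_le_rpow_of_nonpos (ha0 n) (hξmem n).1 (by linarith)
        have hub : (∫ x in (ξ n)..y, x ^ (-p)) ≤ 2 * L * (a n) ^ (-p) := by
          have h2 := aux_rpow_int_ub p (ξ n) y hp0 (by linarith [hξ1 n]) hξy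
          have h4 : y - ξ n ≤ 2 * L := by
            have h5 := (hξmem n).1
            have h6 := hastep2 n
            linarith
          calc (∫ x in (ξ n)..y, x ^ (-p)) ≤ (y - ξ n) * (ξ n) ^ (-p) := h2
          _ ≤ 2 * L * (a n) ^ (-p) :=
              mul_le_mul h4 h3 (Real.rpow_nonneg (by linarith [hξ1 n]) _) (by linarith)
        have t2 : C₂ * (∫ x in (ξ n)..y, x ^ (-p)) ≤ C₂ * (2 * L * (a n) ^ (-p)) :=
          mul_le_mul_of_nonneg_left hub hC₂
        have t3 : C₃ * (ξ n) ^ (-p) ≤ C₃ * (a n) ^ (-p) := mul_le_mul_of_nonneg_left h3 hC₃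
        have t4 : 0 ≤ C₁ * ∫ x in (ξ n)..y, f x := by
          apply mul_nonneg hC₁.le
          exact intervalIntegral.integral_nonneg hξy
            (fun x hx => hf_nonneg x (le_trans (hξ1 n) hx.1))
        have hKeq : (C₀ * Cs + K) * (a n) ^ (-p) =
            C₀ * (Cs * (a n) ^ (-p)) + C₂ * (2 * L * (a n) ^ (-p)) + C₃ * (a n) ^ (-p) := by
          rw [hKdef]; ring
        linarith
    -- transfer to y^(-p)
    have htrans : ∀ c : ℝ, 0 ≤ c → c * (a n) ^ (-p) ≤ c * (1 + 2*L) ^ p * y ^ (-p) := by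
      intro c hc
      have h7 : c * y ^ p ≤ (c * (1 + 2*L) ^ p) * (a n) ^ p := by
        calc c * y ^ p ≤ c * ((1 + 2*L) ^ p * (a n) ^ p) := mul_le_mul_of_nonneg_left hypow hc
        _ = (c * (1 + 2*L) ^ p) * (a n) ^ p := by ring
      exact aux_transfer2 (ha0 n) hypos h7
    have hBc : f y ≤ B * y ^ (-p) := by
      have hc1 : 0 ≤ C₀ * Cs + K := add_nonneg (mul_nonneg hC₀.le hCspos.le) hKnn
      rcases hmain with h1 | h1
      · have h2 := htrans (C₀ * Cs + K) hc1
        have h3 : (C₀ * Cs + K) * (1 + 2*L) ^ p * y ^ (-p) ≤ B * y ^ (-p) := by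
          apply mul_le_mul_of_nonneg_right _ hynegpow.le
          rw [hBdef]
          exact mul_le_mul_of_nonneg_right (by linarith) h2Lp
        linarith
      · have h2 := htrans Cs hCspos.le
        have h3 : Cs * (1 + 2*L) ^ p * y ^ (-p) ≤ B * y ^ (-p) := by
          apply mul_le_mul_of_nonneg_right _ hynegpow.le
          rw [hBdef]
          exact mul_le_mul_of_nonneg_right (by linarith) h2Lp
        linarith
    have h5 : B * y ^ (-p) ≤ Cf * y ^ (-p) := by
      apply mul_le_mul_of_nonneg_right _ hynegpow.le
      rw [hCfdef]; linarith
    linarith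
end

section
/- For every smooth ℂ-valued function ψ on Ω, the Teukolsky operator satisfies the identity 𝐓̂_s ψ = −4(r²+a²)·e₃(e₄ψ) + 𝒰(𝒰ψ) + (1/sinθ)∂_θ(sinθ·∂_θψ) − 4ias·cosθ·Tψ + 2is·(a²sinθcosθ/(r²+a²))·𝒰ψ + 2r·(e₄ψ − μ·e₃ψ) + 4s·[(r−M)·μ^{−1}·e₄ψ − r·Tψ] + (2ar/(r²+a²))·Φψ + s·ψ − s²·(a⁴sin²θcos²θ/(r²+a²)²)·ψ at every point of Ω. -/
noncomputable section

/-- `ℂ`-valued functions of the Boyer–Lindquist coordinates `(t, r, θ, φ)`. -/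
abbrev KF : Type := ℝ → ℝ → ℝ → ℝ → ℂ

/-- Partial derivative in `t` (the operator `T`). -/
def pt (ψ : KF) : KF := fun t r θ φ => deriv (fun t' => ψ t' r θ φ) t
/-- Partial derivative in `r`. -/
def pr (ψ : KF) : KF := fun t r θ φ => deriv (fun r' => ψ t r' θ φ) r
/-- Partial derivative in `θ`. -/
def pth (ψ : KF) : KF := fun t r θ φ => deriv (fun θ' => ψ t r θ' φ) θ
/-- Partial derivative in `φ` (the operator `Φ`). -/
def pph (ψ : KF) : KF := fun t r θ φ => deriv (fun φ' => ψ t r θ φ') φ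

/-- `Δ(r) = r² − 2Mr + a²`. -/
def Δk (M a r : ℝ) : ℝ := r^2 - 2*M*r + a^2

/-- The null vector field `e₃`. -/
def e3 (M a : ℝ) (ψ : KF) : KF := fun t r θ φ =>
  (1/2 : ℂ) * (-(pr ψ t r θ φ)
    + (((r^2 + a^2)/Δk M a r : ℝ) : ℂ) * pt ψ t r θ φ
    + ((a/Δk M a r : ℝ) : ℂ) * pph ψ t r θ φ)

/-- The null vector field `e₄`. -/
def e4 (M a : ℝ) (ψ : KF) : KF := fun t r θ φ =>
  (1/2 : ℂ) * (((Δk M a r/(r^2 + a^2) : ℝ) : ℂ) * pr ψ t r θ φ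
    + pt ψ t r θ φ
    + ((a/(r^2 + a^2) : ℝ) : ℂ) * pph ψ t r θ φ)

/-- The spin-weighted operator `𝒰`. -/
def Uop (M a : ℝ) (s : ℤ) (ψ : KF) : KF := fun t r θ φ =>
  ((1/Real.sin θ : ℝ) : ℂ) * pph ψ t r θ φ
  + ((a * Real.sin θ : ℝ) : ℂ) * pt ψ t r θ φ
  + Complex.I * (s : ℂ) *
      (((Real.cos θ/Real.sin θ) * ((r^2 + a^2 * (Real.cos θ)^2)/(r^2 + a^2)) : ℝ) : ℂ) *
      ψ t r θ φ

/-- The Teukolsky operator `𝐓̂_s`. -/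
def TeukHat (M a : ℝ) (s : ℤ) (ψ : KF) : KF := fun t r θ φ =>
  -((((r^2 + a^2)^2/Δk M a r - a^2 * (Real.sin θ)^2 : ℝ)) : ℂ) * pt (pt ψ) t r θ φ
  - ((4*M*a*r/Δk M a r : ℝ) : ℂ) * pt (pph ψ) t r θ φ
  - ((a^2/Δk M a r - 1/(Real.sin θ)^2 : ℝ) : ℂ) * pph (pph ψ) t r θ φ
  + ((Δk M a r ^ (-s) : ℝ) : ℂ) *
      pr (fun t' r' θ' φ' => ((Δk M a r' ^ (s+1) : ℝ) : ℂ) * pr ψ t' r' θ' φ') t r θ φ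
  + ((1/Real.sin θ : ℝ) : ℂ) *
      pth (fun t' r' θ' φ' => ((Real.sin θ' : ℝ) : ℂ) * pth ψ t' r' θ' φ') t r θ φ
  + 2 * (s : ℂ) * (((a*(r - M)/Δk M a r : ℝ) : ℂ)
      + Complex.I * ((Real.cos θ/(Real.sin θ)^2 : ℝ) : ℂ)) * pph ψ t r θ φ
  + 2 * (s : ℂ) * (((M*(r^2 - a^2)/Δk M a r - r : ℝ) : ℂ)
      - Complex.I * ((a * Real.cos θ : ℝ) : ℂ)) * pt ψ t r θ φ
  - ((((s : ℝ)^2 * (Real.cos θ)^2/(Real.sin θ)^2 - (s : ℝ) : ℝ)) : ℂ) * ψ t r θ φ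

/-- The rescaled Teukolsky operator `𝐓_s = Δ^s 𝐓̂_s (Δ^{−s} ·)`. -/
def Teuk (M a : ℝ) (s : ℤ) (ψ : KF) : KF := fun t r θ φ =>
  ((Δk M a r ^ s : ℝ) : ℂ) *
    TeukHat M a s (fun t' r' θ' φ' => ((Δk M a r' ^ (-s) : ℝ) : ℂ) * ψ t' r' θ' φ') t r θ φ

/-- The open region `Ω = {r₋ < r < r₊, 0 < θ < π}` of the Kerr black hole interior,
in Boyer–Lindquist coordinates `(t, r, θ, φ)`. -/
def KerrΩ (M a : ℝ) : Set (ℝ × ℝ × ℝ × ℝ) :=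
  {p | M - Real.sqrt (M^2 - a^2) < p.2.1 ∧ p.2.1 < M + Real.sqrt (M^2 - a^2)
       ∧ 0 < p.2.2.1 ∧ p.2.2.1 < Real.pi}

/-- The second-order angular operator `ð_{s−1}ð'_s`. -/
def edthMinus (s : ℤ) (ψ : KF) : KF := fun t r θ φ =>
  ((1/Real.sin θ : ℝ) : ℂ) *
      pth (fun t' r' θ' φ' => ((Real.sin θ' : ℝ) : ℂ) * pth ψ t' r' θ' φ') t r θ φ
  + ((1/(Real.sin θ)^2 : ℝ) : ℂ) * pph (pph ψ) t r θ φ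
  + 2 * Complex.I * (s : ℂ) * ((Real.cos θ/(Real.sin θ)^2 : ℝ) : ℂ) * pph ψ t r θ φ
  - ((((s : ℝ)^2 * (Real.cos θ/Real.sin θ)^2 - (s : ℝ)) : ℝ) : ℂ) * ψ t r θ φ

/-- The second-order angular operator `ð'_{s+1}ð_s`. -/
def edthPlus (s : ℤ) (ψ : KF) : KF := fun t r θ φ =>
  ((1/Real.sin θ : ℝ) : ℂ) *
      pth (fun t' r' θ' φ' => ((Real.sin θ' : ℝ) : ℂ) * pth ψ t' r' θ' φ') t r θ φ
  + ((1/(Real.sin θ)^2 : ℝ) : ℂ) * pph (pph ψ) t r θ φ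
  + 2 * Complex.I * (s : ℂ) * ((Real.cos θ/(Real.sin θ)^2 : ℝ) : ℂ) * pph ψ t r θ φ
  - ((((s : ℝ)^2 * (Real.cos θ/Real.sin θ)^2 + (s : ℝ)) : ℝ) : ℂ) * ψ t r θ φ

/-- The spin-weighted Carter operator `𝒬_s`. -/
def Qop (a : ℝ) (s : ℤ) (ψ : KF) : KF := fun t r θ φ =>
  ((a^2 * (Real.sin θ)^2 : ℝ) : ℂ) * pt (pt ψ) t r θ φ
  - 2 * Complex.I * (a : ℂ) * (s : ℂ) * ((Real.cos θ : ℝ) : ℂ) * pt ψ t r θ φ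
  + ((1/Real.sin θ : ℝ) : ℂ) *
      pth (fun t' r' θ' φ' => ((Real.sin θ' : ℝ) : ℂ) * pth ψ t' r' θ' φ') t r θ φ
  + ((1/(Real.sin θ)^2 : ℝ) : ℂ) * pph (pph ψ) t r θ φ
  + 2 * Complex.I * (s : ℂ) * ((Real.cos θ/(Real.sin θ)^2 : ℝ) : ℂ) * pph ψ t r θ φ
  - ((((s : ℝ)^2 * (Real.cos θ/Real.sin θ)^2 + (s : ℝ)) : ℝ) : ℂ) * ψ t r θ φ

def unc (ψ : KF) : ℝ × ℝ × ℝ × ℝ → ℂ := fun q => ψ q.1 q.2.1 q.2.2.1 q.2.2.2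

lemma lineT {E : Type*} [NormedAddCommGroup E] [NormedSpace ℝ E] {F : ℝ×ℝ×ℝ×ℝ → E}
    {F' : ℝ×ℝ×ℝ×ℝ →L[ℝ] E} {t r θ φ : ℝ} (h : HasFDerivAt F F' (t,r,θ,φ)) :
    HasDerivAt (fun t' => F (t',r,θ,φ)) (F' (1,0,0,0)) t := by
  have hL : HasDerivAt (fun t' : ℝ => ((t',r,θ,φ) : ℝ×ℝ×ℝ×ℝ)) (1,0,0,0) t :=
    HasDerivAt.prodMk (hasDerivAt_id t) (hasDerivAt_const t (r,θ,φ))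
  exact h.comp_hasDerivAt t hL
lemma lineR {E : Type*} [NormedAddCommGroup E] [NormedSpace ℝ E] {F : ℝ×ℝ×ℝ×ℝ → E}
    {F' : ℝ×ℝ×ℝ×ℝ →L[ℝ] E} {t r θ φ : ℝ} (h : HasFDerivAt F F' (t,r,θ,φ)) :
    HasDerivAt (fun r' => F (t,r',θ,φ)) (F' (0,1,0,0)) r := by
  have hL : HasDerivAt (fun r' : ℝ => ((t,r',θ,φ) : ℝ×ℝ×ℝ×ℝ)) (0,1,0,0) r :=
    HasDerivAt.prodMk (hasDerivAt_const r t) (HasDerivAt.prodMk (hasDerivAt_id r) (hasDerivAt_const r (θ,φ)))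
  exact h.comp_hasDerivAt r hL
lemma linePh {E : Type*} [NormedAddCommGroup E] [NormedSpace ℝ E] {F : ℝ×ℝ×ℝ×ℝ → E}
    {F' : ℝ×ℝ×ℝ×ℝ →L[ℝ] E} {t r θ φ : ℝ} (h : HasFDerivAt F F' (t,r,θ,φ)) :
    HasDerivAt (fun φ' => F (t,r,θ,φ')) (F' (0,0,0,1)) φ := by
  have hL : HasDerivAt (fun φ' : ℝ => ((t,r,θ,φ') : ℝ×ℝ×ℝ×ℝ)) (0,0,0,1) φ :=
    HasDerivAt.prodMk (hasDerivAt_const φ t) (HasDerivAt.prodMk (hasDerivAt_const φ r)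
      (HasDerivAt.prodMk (hasDerivAt_const φ θ) (hasDerivAt_id φ)))
  exact h.comp_hasDerivAt φ hL
lemma rep_t (ψ : KF) {t r θ φ : ℝ} (h : DifferentiableAt ℝ (unc ψ) (t,r,θ,φ)) :
    pt ψ t r θ φ = fderiv ℝ (unc ψ) (t,r,θ,φ) (1,0,0,0) := (lineT h.hasFDerivAt).deriv
lemma rep_r (ψ : KF) {t r θ φ : ℝ} (h : DifferentiableAt ℝ (unc ψ) (t,r,θ,φ)) :
    pr ψ t r θ φ = fderiv ℝ (unc ψ) (t,r,θ,φ) (0,1,0,0) := (lineR h.hasFDerivAt).deriv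
lemma rep_ph (ψ : KF) {t r θ φ : ℝ} (h : DifferentiableAt ℝ (unc ψ) (t,r,θ,φ)) :
    pph ψ t r θ φ = fderiv ℝ (unc ψ) (t,r,θ,φ) (0,0,0,1) := (linePh h.hasFDerivAt).deriv


set_option maxHeartbeats 4000000 in
/-- **Proposition (expression of `𝐓̂_s` in terms of `e₃`, `e₄`, `𝒰`).** -/
theorem stmt_2 (M a : ℝ) (ha : 0 < |a|) (haM : |a| < M) (s : ℤ) (ψ : KF)
    (hψ : ContDiffOn ℝ (⊤ : ℕ∞) (fun p : ℝ × ℝ × ℝ × ℝ => ψ p.1 p.2.1 p.2.2.1 p.2.2.2) (KerrΩ M a)) :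
    ∀ t r θ φ : ℝ,
      M - Real.sqrt (M^2 - a^2) < r → r < M + Real.sqrt (M^2 - a^2) →
      0 < θ → θ < Real.pi →
      TeukHat M a s ψ t r θ φ =
        (-4) * ((r^2 + a^2 : ℝ) : ℂ) * e3 M a (e4 M a ψ) t r θ φ
        + Uop M a s (Uop M a s ψ) t r θ φ
        + ((1/Real.sin θ : ℝ) : ℂ) *
            pth (fun t' r' θ' φ' => ((Real.sin θ' : ℝ) : ℂ) * pth ψ t' r' θ' φ') t r θ φ
        - 4 * Complex.I * (a : ℂ) * (s : ℂ) * ((Real.cos θ : ℝ) : ℂ) * pt ψ t r θ φ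
        + 2 * Complex.I * (s : ℂ) *
            ((a^2 * Real.sin θ * Real.cos θ/(r^2 + a^2) : ℝ) : ℂ) * Uop M a s ψ t r θ φ
        + 2 * (r : ℂ) * (e4 M a ψ t r θ φ
            - ((Δk M a r/(r^2 + a^2) : ℝ) : ℂ) * e3 M a ψ t r θ φ)
        + 4 * (s : ℂ) * (((r - M : ℝ) : ℂ) * (((r^2 + a^2)/Δk M a r : ℝ) : ℂ) *
              e4 M a ψ t r θ φ - (r : ℂ) * pt ψ t r θ φ)
        + ((2*a*r/(r^2 + a^2) : ℝ) : ℂ) * pph ψ t r θ φ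
        + (s : ℂ) * ψ t r θ φ
        - (s : ℂ)^2 * ((a^4 * (Real.sin θ)^2 * (Real.cos θ)^2/(r^2 + a^2)^2 : ℝ) : ℂ) *
            ψ t r θ φ := by
  intro t r θ φ h1 h2 h3 h4
  -- basic facts
  have ha0 : a ≠ 0 := by simpa using ha.ne'
  have hM : 0 < M := lt_of_le_of_lt (abs_nonneg a) haM
  have hsq : Real.sqrt (M^2 - a^2) ^ 2 = M^2 - a^2 := Real.sq_sqrt (by nlinarith [sq_abs a, abs_nonneg a, mul_pos (sub_pos.2 haM) (lt_of_lt_of_le ha (le_add_of_nonneg_left hM.le) : (0:ℝ) < M + |a|)])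
  have hΔneg : Δk M a r < 0 := by
    have hpos := mul_pos (sub_pos.2 h1) (sub_pos.2 h2)
    unfold Δk; nlinarith [hpos, hsq]
  have hΔ : Δk M a r ≠ 0 := ne_of_lt hΔneg
  have hra : (0:ℝ) < r^2 + a^2 := by positivity
  have hra0 : (r^2 + a^2 : ℝ) ≠ 0 := ne_of_gt hra
  have hsinpos : 0 < Real.sin θ := Real.sin_pos_of_pos_of_lt_pi h3 h4
  have hsin : Real.sin θ ≠ 0 := ne_of_gt hsinpos
  -- smoothness plumbing
  have hΨ : ContDiffOn ℝ (⊤ : ℕ∞) (unc ψ) (KerrΩ M a) := hψ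
  have hU : IsOpen (KerrΩ M a) := by
    have e : KerrΩ M a = (fun p : ℝ×ℝ×ℝ×ℝ => p.2.1) ⁻¹' (Set.Ioo (M - Real.sqrt (M^2-a^2)) (M + Real.sqrt (M^2-a^2)))
        ∩ (fun p : ℝ×ℝ×ℝ×ℝ => p.2.2.1) ⁻¹' (Set.Ioo 0 Real.pi) := by
      ext p; simp [KerrΩ, Set.mem_Ioo, and_assoc]
    rw [e]
    exact ((isOpen_Ioo.preimage (by fun_prop)).inter (isOpen_Ioo.preimage (by fun_prop)))
  have hp : ((t,r,θ,φ) : ℝ×ℝ×ℝ×ℝ) ∈ KerrΩ M a := ⟨h1, h2, h3, h4⟩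
  have hdiffat : ∀ q ∈ KerrΩ M a, DifferentiableAt ℝ (unc ψ) q :=
    fun q hq => (hΨ.contDiffAt (hU.mem_nhds hq)).differentiableAt (by simp)
  have hΨ' : ContDiffOn ℝ (⊤ : ℕ∞) (fderiv ℝ (unc ψ)) (KerrΩ M a) := hΨ.fderiv_of_isOpen hU (by simp)
  have hG : HasFDerivAt (fderiv ℝ (unc ψ)) (fderiv ℝ (fderiv ℝ (unc ψ)) (t,r,θ,φ)) (t,r,θ,φ) :=
    ((hΨ'.contDiffAt (hU.mem_nhds hp)).differentiableAt (by simp)).hasFDerivAt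
  have hApp : ∀ v : ℝ×ℝ×ℝ×ℝ, HasFDerivAt (fun x => fderiv ℝ (unc ψ) x v)
      ((ContinuousLinearMap.apply ℝ ℂ v).comp (fderiv ℝ (fderiv ℝ (unc ψ)) (t,r,θ,φ))) (t,r,θ,φ) :=
    fun v => (ContinuousLinearMap.apply ℝ ℂ v).hasFDerivAt.comp (t,r,θ,φ) hG
  have hsymm : IsSymmSndFDerivAt ℝ (unc ψ) (t,r,θ,φ) :=
    (hΨ.contDiffAt (hU.mem_nhds hp)).isSymmSndFDerivAt (by rw [minSmoothness_of_isRCLikeNormedField]; exact WithTop.coe_le_coe.mpr (le_top : (2:ℕ∞) ≤ ⊤))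
  have hev : ∀ᶠ r' in nhds r, ((t,r',θ,φ) : ℝ×ℝ×ℝ×ℝ) ∈ KerrΩ M a := by
    filter_upwards [Ioo_mem_nhds h1 h2] with r' hr'
    exact ⟨hr'.1, hr'.2, h3, h4⟩
  -- first order values at p
  have hDt : pt ψ t r θ φ = fderiv ℝ (unc ψ) (t,r,θ,φ) (1,0,0,0) := rep_t ψ (hdiffat _ hp)
  have hDr : pr ψ t r θ φ = fderiv ℝ (unc ψ) (t,r,θ,φ) (0,1,0,0) := rep_r ψ (hdiffat _ hp)
  have hDφ : pph ψ t r θ φ = fderiv ℝ (unc ψ) (t,r,θ,φ) (0,0,0,1) := rep_ph ψ (hdiffat _ hp)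
  -- nine line facts
  have Htt : HasDerivAt (fun t' => pt ψ t' r θ φ)
      (fderiv ℝ (fderiv ℝ (unc ψ)) (t,r,θ,φ) (1,0,0,0) (1,0,0,0)) t := by
    have h0 := lineT (hApp (1,0,0,0))
    have he : (fun t' => pt ψ t' r θ φ) = fun t' => fderiv ℝ (unc ψ) (t',r,θ,φ) (1,0,0,0) :=
      funext fun t' => rep_t ψ (hdiffat _ ⟨h1,h2,h3,h4⟩)
    rw [he]; exact h0
  have Htr : HasDerivAt (fun t' => pr ψ t' r θ φ)
      (fderiv ℝ (fderiv ℝ (unc ψ)) (t,r,θ,φ) (1,0,0,0) (0,1,0,0)) t := by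
    have h0 := lineT (hApp (0,1,0,0))
    have he : (fun t' => pr ψ t' r θ φ) = fun t' => fderiv ℝ (unc ψ) (t',r,θ,φ) (0,1,0,0) :=
      funext fun t' => rep_r ψ (hdiffat _ ⟨h1,h2,h3,h4⟩)
    rw [he]; exact h0
  have Htφ : HasDerivAt (fun t' => pph ψ t' r θ φ)
      (fderiv ℝ (fderiv ℝ (unc ψ)) (t,r,θ,φ) (1,0,0,0) (0,0,0,1)) t := by
    have h0 := lineT (hApp (0,0,0,1))
    have he : (fun t' => pph ψ t' r θ φ) = fun t' => fderiv ℝ (unc ψ) (t',r,θ,φ) (0,0,0,1) :=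
      funext fun t' => rep_ph ψ (hdiffat _ ⟨h1,h2,h3,h4⟩)
    rw [he]; exact h0
  have Hφt : HasDerivAt (fun φ' => pt ψ t r θ φ')
      (fderiv ℝ (fderiv ℝ (unc ψ)) (t,r,θ,φ) (0,0,0,1) (1,0,0,0)) φ := by
    have h0 := linePh (hApp (1,0,0,0))
    have he : (fun φ' => pt ψ t r θ φ') = fun φ' => fderiv ℝ (unc ψ) (t,r,θ,φ') (1,0,0,0) :=
      funext fun φ' => rep_t ψ (hdiffat _ ⟨h1,h2,h3,h4⟩)
    rw [he]; exact h0
  have Hφr : HasDerivAt (fun φ' => pr ψ t r θ φ')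
      (fderiv ℝ (fderiv ℝ (unc ψ)) (t,r,θ,φ) (0,0,0,1) (0,1,0,0)) φ := by
    have h0 := linePh (hApp (0,1,0,0))
    have he : (fun φ' => pr ψ t r θ φ') = fun φ' => fderiv ℝ (unc ψ) (t,r,θ,φ') (0,1,0,0) :=
      funext fun φ' => rep_r ψ (hdiffat _ ⟨h1,h2,h3,h4⟩)
    rw [he]; exact h0
  have Hφφ : HasDerivAt (fun φ' => pph ψ t r θ φ')
      (fderiv ℝ (fderiv ℝ (unc ψ)) (t,r,θ,φ) (0,0,0,1) (0,0,0,1)) φ := by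
    have h0 := linePh (hApp (0,0,0,1))
    have he : (fun φ' => pph ψ t r θ φ') = fun φ' => fderiv ℝ (unc ψ) (t,r,θ,φ') (0,0,0,1) :=
      funext fun φ' => rep_ph ψ (hdiffat _ ⟨h1,h2,h3,h4⟩)
    rw [he]; exact h0
  have Hrt : HasDerivAt (fun r' => pt ψ t r' θ φ)
      (fderiv ℝ (fderiv ℝ (unc ψ)) (t,r,θ,φ) (0,1,0,0) (1,0,0,0)) r :=
    (lineR (hApp (1,0,0,0))).congr_of_eventuallyEq (hev.mono fun r' h => rep_t ψ (hdiffat _ h))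
  have Hrr : HasDerivAt (fun r' => pr ψ t r' θ φ)
      (fderiv ℝ (fderiv ℝ (unc ψ)) (t,r,θ,φ) (0,1,0,0) (0,1,0,0)) r :=
    (lineR (hApp (0,1,0,0))).congr_of_eventuallyEq (hev.mono fun r' h => rep_r ψ (hdiffat _ h))
  have Hrφ : HasDerivAt (fun r' => pph ψ t r' θ φ)
      (fderiv ℝ (fderiv ℝ (unc ψ)) (t,r,θ,φ) (0,1,0,0) (0,0,0,1)) r :=
    (lineR (hApp (0,0,0,1))).congr_of_eventuallyEq (hev.mono fun r' h => rep_ph ψ (hdiffat _ h))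
  -- ψ itself along lines at p
  have hψt : HasDerivAt (fun t' => ψ t' r θ φ) (fderiv ℝ (unc ψ) (t,r,θ,φ) (1,0,0,0)) t :=
    lineT (hdiffat _ hp).hasFDerivAt
  have hψφ : HasDerivAt (fun φ' => ψ t r θ φ') (fderiv ℝ (unc ψ) (t,r,θ,φ) (0,0,0,1)) φ :=
    linePh (hdiffat _ hp).hasFDerivAt
  -- coefficient derivatives along r
  have hlin : HasDerivAt (fun r' : ℝ => 2*M*r') (2*M) r := by
    simpa using (hasDerivAt_id r).const_mul (2*M)
  have hΔd : HasDerivAt (fun r' : ℝ => Δk M a r') (2*r - 2*M) r := by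
    have h' := ((hasDerivAt_pow 2 r).sub hlin).add_const (a^2)
    have h'' : HasDerivAt (fun r' : ℝ => r'^2 - 2*M*r' + a^2) (2*r - 2*M) r := by
      exact h'.congr_deriv (by norm_num)
    exact h''
  have hr2d : HasDerivAt (fun r' : ℝ => r'^2 + a^2) (2*r) r := by
    have h' := (hasDerivAt_pow 2 r).add_const (a^2)
    exact h'.congr_deriv (by norm_num)
  have hfdC : HasDerivAt (fun r' => ((Δk M a r'/(r'^2 + a^2) : ℝ) : ℂ))
      ((((2*r - 2*M) * (r^2 + a^2) - Δk M a r * (2*r)) / (r^2 + a^2)^2 : ℝ) : ℂ) r :=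
    (hΔd.div hr2d hra0).ofReal_comp
  have hgdC : HasDerivAt (fun r' => ((a/(r'^2 + a^2) : ℝ) : ℂ))
      (((0 * (r^2 + a^2) - a * (2*r)) / (r^2 + a^2)^2 : ℝ) : ℂ) r :=
    ((hasDerivAt_const r a).div hr2d hra0).ofReal_comp
  have hzdC : HasDerivAt (fun r' => ((Δk M a r' ^ (s+1) : ℝ) : ℂ))
      (((((s+1 : ℤ) : ℝ) * Δk M a r ^ (s + 1 - 1)) * (2*r - 2*M) : ℝ) : ℂ) r :=
    ((hasDerivAt_zpow (s+1) (Δk M a r) (Or.inl hΔ)).comp r hΔd).ofReal_comp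

  -- second-derivative evaluations
  have Ett : pt (pt ψ) t r θ φ = fderiv ℝ (fderiv ℝ (unc ψ)) (t,r,θ,φ) (1,0,0,0) (1,0,0,0) := Htt.deriv
  have Etφ : pt (pph ψ) t r θ φ = fderiv ℝ (fderiv ℝ (unc ψ)) (t,r,θ,φ) (1,0,0,0) (0,0,0,1) := Htφ.deriv
  have Eφφ : pph (pph ψ) t r θ φ = fderiv ℝ (fderiv ℝ (unc ψ)) (t,r,θ,φ) (0,0,0,1) (0,0,0,1) := Hφφ.deriv
  have Err : pr (fun t' r' θ' φ' => ((Δk M a r' ^ (s+1) : ℝ) : ℂ) * pr ψ t' r' θ' φ') t r θ φ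
      = (((((s+1 : ℤ) : ℝ) * Δk M a r ^ (s + 1 - 1)) * (2*r - 2*M) : ℝ) : ℂ) * pr ψ t r θ φ
        + ((Δk M a r ^ (s+1) : ℝ) : ℂ) * fderiv ℝ (fderiv ℝ (unc ψ)) (t,r,θ,φ) (0,1,0,0) (0,1,0,0) :=
    (hzdC.mul Hrr).deriv
  have Ee4r : pr (e4 M a ψ) t r θ φ = (1/2 : ℂ) *
      (((((2*r - 2*M) * (r^2 + a^2) - Δk M a r * (2*r)) / (r^2 + a^2)^2 : ℝ) : ℂ) * pr ψ t r θ φ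
          + ((Δk M a r/(r^2 + a^2) : ℝ) : ℂ) * fderiv ℝ (fderiv ℝ (unc ψ)) (t,r,θ,φ) (0,1,0,0) (0,1,0,0)
        + fderiv ℝ (fderiv ℝ (unc ψ)) (t,r,θ,φ) (0,1,0,0) (1,0,0,0)
        + ((((0 * (r^2 + a^2) - a * (2*r)) / (r^2 + a^2)^2 : ℝ) : ℂ) * pph ψ t r θ φ
          + ((a/(r^2 + a^2) : ℝ) : ℂ) * fderiv ℝ (fderiv ℝ (unc ψ)) (t,r,θ,φ) (0,1,0,0) (0,0,0,1))) :=
    ((((hfdC.mul Hrr).add Hrt).add (hgdC.mul Hrφ)).const_mul (1/2 : ℂ)).deriv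
  have Ee4t : pt (e4 M a ψ) t r θ φ = (1/2 : ℂ) *
      (((Δk M a r/(r^2 + a^2) : ℝ) : ℂ) * fderiv ℝ (fderiv ℝ (unc ψ)) (t,r,θ,φ) (1,0,0,0) (0,1,0,0)
        + fderiv ℝ (fderiv ℝ (unc ψ)) (t,r,θ,φ) (1,0,0,0) (1,0,0,0)
        + ((a/(r^2 + a^2) : ℝ) : ℂ) * fderiv ℝ (fderiv ℝ (unc ψ)) (t,r,θ,φ) (1,0,0,0) (0,0,0,1)) :=
    ((((Htr.const_mul (((Δk M a r/(r^2 + a^2) : ℝ) : ℂ))).add Htt).add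
        (Htφ.const_mul (((a/(r^2 + a^2) : ℝ) : ℂ)))).const_mul (1/2 : ℂ)).deriv
  have Ee4φ : pph (e4 M a ψ) t r θ φ = (1/2 : ℂ) *
      (((Δk M a r/(r^2 + a^2) : ℝ) : ℂ) * fderiv ℝ (fderiv ℝ (unc ψ)) (t,r,θ,φ) (0,0,0,1) (0,1,0,0)
        + fderiv ℝ (fderiv ℝ (unc ψ)) (t,r,θ,φ) (0,0,0,1) (1,0,0,0)
        + ((a/(r^2 + a^2) : ℝ) : ℂ) * fderiv ℝ (fderiv ℝ (unc ψ)) (t,r,θ,φ) (0,0,0,1) (0,0,0,1)) :=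
    ((((Hφr.const_mul (((Δk M a r/(r^2 + a^2) : ℝ) : ℂ))).add Hφt).add
        (Hφφ.const_mul (((a/(r^2 + a^2) : ℝ) : ℂ)))).const_mul (1/2 : ℂ)).deriv
  have EUφ : pph (Uop M a s ψ) t r θ φ =
      ((1/Real.sin θ : ℝ) : ℂ) * fderiv ℝ (fderiv ℝ (unc ψ)) (t,r,θ,φ) (0,0,0,1) (0,0,0,1)
        + ((a * Real.sin θ : ℝ) : ℂ) * fderiv ℝ (fderiv ℝ (unc ψ)) (t,r,θ,φ) (0,0,0,1) (1,0,0,0)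
        + Complex.I * (s : ℂ) *
            (((Real.cos θ/Real.sin θ) * ((r^2 + a^2 * (Real.cos θ)^2)/(r^2 + a^2)) : ℝ) : ℂ) *
            fderiv ℝ (unc ψ) (t,r,θ,φ) (0,0,0,1) :=
    (((Hφφ.const_mul (((1/Real.sin θ : ℝ) : ℂ))).add (Hφt.const_mul (((a * Real.sin θ : ℝ) : ℂ)))).add
      (hψφ.const_mul (Complex.I * (s : ℂ) *
        (((Real.cos θ/Real.sin θ) * ((r^2 + a^2 * (Real.cos θ)^2)/(r^2 + a^2)) : ℝ) : ℂ)))).deriv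
  have EUt : pt (Uop M a s ψ) t r θ φ =
      ((1/Real.sin θ : ℝ) : ℂ) * fderiv ℝ (fderiv ℝ (unc ψ)) (t,r,θ,φ) (1,0,0,0) (0,0,0,1)
        + ((a * Real.sin θ : ℝ) : ℂ) * fderiv ℝ (fderiv ℝ (unc ψ)) (t,r,θ,φ) (1,0,0,0) (1,0,0,0)
        + Complex.I * (s : ℂ) *
            (((Real.cos θ/Real.sin θ) * ((r^2 + a^2 * (Real.cos θ)^2)/(r^2 + a^2)) : ℝ) : ℂ) *
            fderiv ℝ (unc ψ) (t,r,θ,φ) (1,0,0,0) :=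
    (((Htφ.const_mul (((1/Real.sin θ : ℝ) : ℂ))).add (Htt.const_mul (((a * Real.sin θ : ℝ) : ℂ)))).add
      (hψt.const_mul (Complex.I * (s : ℂ) *
        (((Real.cos θ/Real.sin θ) * ((r^2 + a^2 * (Real.cos θ)^2)/(r^2 + a^2)) : ℝ) : ℂ)))).deriv
  -- body unfoldings (rfl)
  have hbodyTeuk : TeukHat M a s ψ t r θ φ =
      -((((r^2 + a^2)^2/Δk M a r - a^2 * (Real.sin θ)^2 : ℝ)) : ℂ) * pt (pt ψ) t r θ φ
      - ((4*M*a*r/Δk M a r : ℝ) : ℂ) * pt (pph ψ) t r θ φ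
      - ((a^2/Δk M a r - 1/(Real.sin θ)^2 : ℝ) : ℂ) * pph (pph ψ) t r θ φ
      + ((Δk M a r ^ (-s) : ℝ) : ℂ) *
          pr (fun t' r' θ' φ' => ((Δk M a r' ^ (s+1) : ℝ) : ℂ) * pr ψ t' r' θ' φ') t r θ φ
      + ((1/Real.sin θ : ℝ) : ℂ) *
          pth (fun t' r' θ' φ' => ((Real.sin θ' : ℝ) : ℂ) * pth ψ t' r' θ' φ') t r θ φ
      + 2 * (s : ℂ) * (((a*(r - M)/Δk M a r : ℝ) : ℂ)
          + Complex.I * ((Real.cos θ/(Real.sin θ)^2 : ℝ) : ℂ)) * pph ψ t r θ φ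
      + 2 * (s : ℂ) * (((M*(r^2 - a^2)/Δk M a r - r : ℝ) : ℂ)
          - Complex.I * ((a * Real.cos θ : ℝ) : ℂ)) * pt ψ t r θ φ
      - ((((s : ℝ)^2 * (Real.cos θ)^2/(Real.sin θ)^2 - (s : ℝ) : ℝ)) : ℂ) * ψ t r θ φ := rfl
  have hbodyE3e4 : e3 M a (e4 M a ψ) t r θ φ =
      (1/2 : ℂ) * (-(pr (e4 M a ψ) t r θ φ)
        + (((r^2 + a^2)/Δk M a r : ℝ) : ℂ) * pt (e4 M a ψ) t r θ φ
        + ((a/Δk M a r : ℝ) : ℂ) * pph (e4 M a ψ) t r θ φ) := rfl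
  have hbodyUU : Uop M a s (Uop M a s ψ) t r θ φ =
      ((1/Real.sin θ : ℝ) : ℂ) * pph (Uop M a s ψ) t r θ φ
      + ((a * Real.sin θ : ℝ) : ℂ) * pt (Uop M a s ψ) t r θ φ
      + Complex.I * (s : ℂ) *
          (((Real.cos θ/Real.sin θ) * ((r^2 + a^2 * (Real.cos θ)^2)/(r^2 + a^2)) : ℝ) : ℂ) *
          Uop M a s ψ t r θ φ := rfl
  have hbodyU : Uop M a s ψ t r θ φ =
      ((1/Real.sin θ : ℝ) : ℂ) * pph ψ t r θ φ
      + ((a * Real.sin θ : ℝ) : ℂ) * pt ψ t r θ φ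
      + Complex.I * (s : ℂ) *
          (((Real.cos θ/Real.sin θ) * ((r^2 + a^2 * (Real.cos θ)^2)/(r^2 + a^2)) : ℝ) : ℂ) *
          ψ t r θ φ := rfl
  have hbodyE3 : e3 M a ψ t r θ φ =
      (1/2 : ℂ) * (-(pr ψ t r θ φ)
        + (((r^2 + a^2)/Δk M a r : ℝ) : ℂ) * pt ψ t r θ φ
        + ((a/Δk M a r : ℝ) : ℂ) * pph ψ t r θ φ) := rfl
  have hbodyE4 : e4 M a ψ t r θ φ =
      (1/2 : ℂ) * (((Δk M a r/(r^2 + a^2) : ℝ) : ℂ) * pr ψ t r θ φ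
        + pt ψ t r θ φ
        + ((a/(r^2 + a^2) : ℝ) : ℂ) * pph ψ t r θ φ) := rfl
  rw [hbodyTeuk, hbodyE3e4, hbodyUU, hbodyE3, hbodyE4, hbodyU, Ett, Etφ, Eφφ, Err,
    Ee4r, Ee4t, Ee4φ, EUφ, EUt, hDt, hDr, hDφ,
    hsymm (0,1,0,0) (1,0,0,0), hsymm (0,0,0,1) (1,0,0,0), hsymm (0,0,0,1) (0,1,0,0)]
  generalize ψ t r θ φ = P
  generalize pth (fun t' r' θ' φ' => ((Real.sin θ' : ℝ) : ℂ) * pth ψ t' r' θ' φ') t r θ φ = Cang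
  generalize fderiv ℝ (unc ψ) (t,r,θ,φ) (1,0,0,0) = Dt
  generalize fderiv ℝ (unc ψ) (t,r,θ,φ) (0,1,0,0) = Dr
  generalize fderiv ℝ (unc ψ) (t,r,θ,φ) (0,0,0,1) = Dp
  generalize fderiv ℝ (fderiv ℝ (unc ψ)) (t,r,θ,φ) (1,0,0,0) (1,0,0,0) = Stt
  generalize fderiv ℝ (fderiv ℝ (unc ψ)) (t,r,θ,φ) (1,0,0,0) (0,1,0,0) = Str
  generalize fderiv ℝ (fderiv ℝ (unc ψ)) (t,r,θ,φ) (1,0,0,0) (0,0,0,1) = Stp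
  generalize fderiv ℝ (fderiv ℝ (unc ψ)) (t,r,θ,φ) (0,1,0,0) (0,1,0,0) = Srr
  generalize fderiv ℝ (fderiv ℝ (unc ψ)) (t,r,θ,φ) (0,1,0,0) (0,0,0,1) = Srp
  generalize fderiv ℝ (fderiv ℝ (unc ψ)) (t,r,θ,φ) (0,0,0,1) (0,0,0,1) = Spp
  have hzA : (↑(Δk M a r ^ (-s)) : ℂ) * (↑(((s+1 : ℤ) : ℝ) * Δk M a r ^ (s + 1 - 1) * (2 * r - 2 * M)) * Dr + ↑(Δk M a r ^ (s + 1)) * Srr) = ((s:ℂ)+1) * (2*(r:ℂ) - 2*(M:ℂ)) * Dr + ((Δk M a r : ℝ):ℂ) * Srr := by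
    have e1 : s + 1 - 1 = s := by ring
    have h1 : (Δk M a r) ^ (-s) * (Δk M a r) ^ s = 1 := by
      rw [← zpow_add₀ hΔ, neg_add_cancel, zpow_zero]
    have h2 : (Δk M a r) ^ (-s) * (Δk M a r) ^ (s+1) = Δk M a r := by
      rw [← zpow_add₀ hΔ, show -s + (s+1) = 1 by ring, zpow_one]
    have h1c : ((Δk M a r : ℂ)) ^ (-s) * ((Δk M a r : ℂ)) ^ s = 1 := by exact_mod_cast h1
    have h2c : ((Δk M a r : ℂ)) ^ (-s) * ((Δk M a r : ℂ)) ^ (s+1) = ((Δk M a r : ℝ) : ℂ) := by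
      exact_mod_cast h2
    rw [e1]
    push_cast
    linear_combination (((s:ℂ)+1) * (2*(r:ℂ) - 2*(M:ℂ)) * Dr) * h1c + Srr * h2c
  rw [hzA]
  simp only [Δk]
  have hΔ' : (r^2 - 2*M*r + a^2 : ℝ) ≠ 0 := hΔ
  have hsc : ((Real.sin θ : ℂ))^2 + ((Real.cos θ : ℂ))^2 = 1 := by
    exact_mod_cast congrArg (Complex.ofReal) (Real.sin_sq_add_cos_sq θ)
  have hI := Complex.I_sq
  have hraC : ((r:ℂ)^2 + (a:ℂ)^2) ≠ 0 := by exact_mod_cast hra0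
  have hΔC : ((r:ℂ)^2 - 2*(M:ℂ)*(r:ℂ) + (a:ℂ)^2) ≠ 0 := by exact_mod_cast hΔ'
  have hsinC : Complex.sin (θ:ℂ) ≠ 0 := by
    rw [← Complex.ofReal_sin]; exact_mod_cast hsin
  push_cast
  set m := (M:ℂ) with hmd
  set ac := (a:ℂ) with hacd
  set rc := (r:ℂ) with hrcd
  set sc := (s:ℂ) with hscd
  set si := Complex.sin (θ:ℂ) with hsid
  set co := Complex.cos (θ:ℂ) with hcod
  set dd := rc ^ 2 - 2 * m * rc + ac ^ 2 with hdd
  set Rv := rc ^ 2 + ac ^ 2 with hRv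
  have hsc2 : si^2 + co^2 = 1 := by
    rw [hsid, hcod]; exact Complex.sin_sq_add_cos_sq _
  have hu : si * si⁻¹ = 1 := mul_inv_cancel₀ hsinC
  have hv : dd * dd⁻¹ = 1 := mul_inv_cancel₀ hΔC
  have hw : Rv * Rv⁻¹ = 1 := mul_inv_cancel₀ hraC
  have hfac : (si^2 * dd * Rv^2 : ℂ) ≠ 0 :=
    mul_ne_zero (mul_ne_zero (pow_ne_zero _ hsinC) hΔC) (pow_ne_zero _ hraC)
  simp only [div_eq_mul_inv, ← inv_pow]
  apply mul_right_cancel₀ hfac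
  linear_combination
    (2*co*Complex.I*sc*dd*Rv^2*Dp + (-1)*co^2*sc^2*dd*Rv^2*P + 2*si*co*Complex.I*sc*dd*Rv^2*si⁻¹*Dp + (-1)*si*co^2*sc^2*dd*Rv^2*si⁻¹*P + (-2)*rc^2*co*Complex.I*sc*dd*Rv^2*Rv⁻¹*Dp + (-2)*rc^2*si*co*Complex.I*sc*dd*Rv^2*si⁻¹*Rv⁻¹*Dp + (-1)*rc^4*co^2*Complex.I^2*sc^2*dd*Rv^2*Rv⁻¹^2*P + (-1)*rc^4*si*co^2*Complex.I^2*sc^2*dd*Rv^2*si⁻¹*Rv⁻¹^2*P + (-2)*ac*si^2*dd*Rv^2*Stp + (-2)*ac*rc^2*si^2*co*Complex.I*sc*dd*Rv^2*Rv⁻¹*Dt + (-2)*ac^2*co^3*Complex.I*sc*dd*Rv^2*Rv⁻¹*Dp + (-2)*ac^2*si*co^3*Complex.I*sc*dd*Rv^2*si⁻¹*Rv⁻¹*Dp + (-2)*ac^2*si^2*co*Complex.I*sc*dd*Rv^2*Rv⁻¹*Dp + (-2)*ac^2*rc^2*co^4*Complex.I^2*sc^2*dd*Rv^2*Rv⁻¹^2*P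 + (-2)*ac^2*rc^2*si*co^4*Complex.I^2*sc^2*dd*Rv^2*si⁻¹*Rv⁻¹^2*P + (-2)*ac^2*rc^2*si^2*co^2*Complex.I^2*sc^2*dd*Rv^2*Rv⁻¹^2*P + (-2)*ac^3*si^2*co^3*Complex.I*sc*dd*Rv^2*Rv⁻¹*Dt + (-1)*ac^4*co^6*Complex.I^2*sc^2*dd*Rv^2*Rv⁻¹^2*P + (-1)*ac^4*si*co^6*Complex.I^2*sc^2*dd*Rv^2*si⁻¹*Rv⁻¹^2*P + (-2)*ac^4*si^2*co^4*Complex.I^2*sc^2*dd*Rv^2*Rv⁻¹^2*P) * hu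
    + (si^2*dd*Rv^4*Rv⁻¹*Str + rc*si^2*dd*Rv^3*Rv⁻¹*Dt + (-2)*rc*si^2*sc*Rv^3*Dt + (-2)*rc*si^2*sc*dd*Rv^3*Rv⁻¹*Dr + ac*si^2*Rv^3*Stp + ac*si^2*Rv^4*Rv⁻¹*Stp + ac*si^2*dd*Rv^3*Rv⁻¹*Srp + ac*rc*si^2*dd*Rv^2*Rv⁻¹*Dp + 2*ac*rc*si^2*sc*Rv^2*Dp + (-2)*ac*rc*si^2*sc*Rv^3*Rv⁻¹*Dp + (-1)*ac^2*si^2*Rv^2*Spp + ac^2*si^2*Rv^3*Rv⁻¹*Spp + 2*m*si^2*sc*Rv^3*Dt + 2*m*si^2*sc*dd*Rv^3*Rv⁻¹*Dr + 2*m*rc^2*si^2*sc*Rv^2*Dt + (-2)*m*ac*si^2*sc*Rv^2*Dp + 2*m*ac*si^2*sc*Rv^3*Rv⁻¹*Dp + (-4)*m*ac*rc*si^2*Rv^2*Stp + (-2)*m*ac^2*si^2*sc*Rv^2*Dt) * hv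
    + (si^2*dd*Rv^3*Str + (-1)*si^2*dd^2*Rv^2*Srr + (-2)*rc*si^2*dd*Rv^2*Dr + rc*si^2*dd*Rv^2*Dt + (-2)*rc*si^2*dd*Rv^3*Rv⁻¹*Dr + 2*rc*si^2*dd^2*Rv^2*Rv⁻¹*Dr + (-2)*rc*si^2*sc*dd*Rv^2*Dr + (-2)*rc^2*co*Complex.I*sc*dd*Rv*Dp + (-1)*rc^4*co^2*Complex.I^2*sc^2*dd*P + (-1)*rc^4*co^2*Complex.I^2*sc^2*dd*Rv*Rv⁻¹*P + ac*si^2*Rv^3*Stp + 2*ac*rc*si^2*dd*Rv^2*Rv⁻¹*Dp + (-2)*ac*rc*si^2*sc*Rv^2*Dp + (-2)*ac*rc^2*si^2*co*Complex.I*sc*dd*Rv*Dt + (-2)*ac^2*co^3*Complex.I*sc*dd*Rv*Dp + ac^2*si^2*Rv^2*Spp + (-2)*ac^2*si^2*co*Complex.I*sc*dd*Rv*Dp + (-2)*ac^2*rc^2*co^4*Complex.I^2*sc^2*dd*P + (-2)*ac^2*rc^2*co^4*Complex.I^2*sc^2*dd*Rv*Rv⁻¹*P + (-2)*ac^2*rc^2*si^2*co^2*Complex.I^2*sc^2*dd*P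 + (-2)*ac^2*rc^2*si^2*co^2*Complex.I^2*sc^2*dd*Rv*Rv⁻¹*P + (-2)*ac^3*si^2*co^3*Complex.I*sc*dd*Rv*Dt + (-2)*ac^3*si^4*co*Complex.I*sc*dd*Rv*Dt + (-1)*ac^4*co^6*Complex.I^2*sc^2*dd*P + (-1)*ac^4*co^6*Complex.I^2*sc^2*dd*Rv*Rv⁻¹*P + (-2)*ac^4*si^2*co^4*Complex.I^2*sc^2*dd*P + (-2)*ac^4*si^2*co^4*Complex.I^2*sc^2*dd*Rv*Rv⁻¹*P + ac^4*si^4*co^2*sc^2*dd*P + ac^4*si^4*co^2*sc^2*dd*Rv*Rv⁻¹*P + 2*m*si^2*dd*Rv^2*Dr + 2*m*si^2*dd*Rv^3*Rv⁻¹*Dr + 2*m*si^2*sc*dd*Rv^2*Dr + 2*m*ac*si^2*sc*Rv^2*Dp) * hw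
    + ((-1)*rc^4*co^2*sc^2*dd*P + (-2)*ac^2*rc^2*co^4*sc^2*dd*P + (-2)*ac^2*rc^2*si^2*co^2*sc^2*dd*P + (-1)*ac^4*co^6*sc^2*dd*P + (-2)*ac^4*si^2*co^4*sc^2*dd*P) * hI
    + ((-1)*sc^2*dd*Rv^2*P + rc^4*sc^2*dd*P + (-2)*ac^2*co*Complex.I*sc*dd*Rv*Dp + 2*ac^2*rc^2*sc^2*dd*P + 2*ac^2*rc^2*co^2*sc^2*dd*P + (-2)*ac^3*si^2*co*Complex.I*sc*dd*Rv*Dt + ac^4*sc^2*dd*P + ac^4*co^2*sc^2*dd*P + ac^4*co^4*sc^2*dd*P + ac^4*si^2*co^2*sc^2*dd*P) * hsc2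
    + ((-1)*sc^2*Rv^2*P + 2*co*Complex.I*sc*Rv^2*Dp + si^2*sc^2*Rv^2*P + 2*rc*si^2*sc*Rv^2*Dt + (-2)*rc^2*co*Complex.I*sc*Rv*Dp + rc^4*sc^2*P + (-1)*rc^4*si^2*sc^2*P + (-2)*ac*si^2*Rv^2*Stp + 2*ac*si^2*co*Complex.I*sc*Rv^2*Dt + (-2)*ac*rc^2*si^2*co*Complex.I*sc*Rv*Dt + (-2)*ac^2*co*Complex.I*sc*Rv*Dp + 2*ac^2*rc^2*sc^2*P + (-2)*ac^2*rc^2*si^2*sc^2*P + (-2)*ac^3*si^2*co*Complex.I*sc*Rv*Dt + ac^4*sc^2*P + (-1)*ac^4*si^2*sc^2*P) * hdd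
    + ((-2)*rc*si^2*sc*Rv^2*Dt + (-1)*rc^2*sc^2*Rv*P + 2*rc^2*co*Complex.I*sc*Rv*Dp + rc^2*si^2*sc^2*Rv*P + (-1)*rc^4*sc^2*P + rc^4*si^2*sc^2*P + 2*ac*si^2*Rv^2*Stp + 2*ac*rc^2*si^2*co*Complex.I*sc*Rv*Dt + (-1)*ac^2*sc^2*Rv*P + 2*ac^2*co*Complex.I*sc*Rv*Dp + ac^2*si^2*sc^2*Rv*P + (-2)*ac^2*rc^2*sc^2*P + 2*ac^2*rc^2*si^2*sc^2*P + 2*ac^3*si^2*co*Complex.I*sc*Rv*Dt + (-1)*ac^4*sc^2*P + ac^4*si^2*sc^2*P + 2*m*si^2*sc*Rv^2*Dt + 2*m*rc*sc^2*Rv*P + (-4)*m*rc*co*Complex.I*sc*Rv*Dp + (-2)*m*rc*si^2*sc^2*Rv*P + 2*m*rc^3*sc^2*P + (-2)*m*rc^3*si^2*sc^2*P + (-4)*m*ac*rc*si^2*co*Complex.I*sc*Rv*Dt + 2*m*ac^2*rc*sc^2*P + (-2)*m*ac^2*rc*si^2*sc^2*P) * hRv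
end
end

section
/- For every smooth ℂ-valued function ψ on Ω, the conjugation identity Δ^s·𝐓̂_s(Δ^{−s}·ψ) = 𝐓̂_s ψ − 2s·ψ − 4s·(r−M)·∂_r ψ holds at every point of Ω; equivalently, the rescaled Teukolsky operator 𝐓_s ψ = Δ^s·𝐓̂_s(Δ^{−s}ψ) satisfies 𝐓̂_s = 𝐓_s + 2s + 4s(r−M)∂_r. -/
noncomputable section

section Aux

lemma mulk_pt (k : ℝ → ℝ) (u : KF) :
    pt (fun t' r' θ' φ' => ((k r' : ℝ) : ℂ) * u t' r' θ' φ')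
      = fun t' r' θ' φ' => ((k r' : ℝ) : ℂ) * pt u t' r' θ' φ' := by
  funext t' r' θ' φ'
  exact deriv_const_mul_field _

lemma mulk_pph (k : ℝ → ℝ) (u : KF) :
    pph (fun t' r' θ' φ' => ((k r' : ℝ) : ℂ) * u t' r' θ' φ')
      = fun t' r' θ' φ' => ((k r' : ℝ) : ℂ) * pph u t' r' θ' φ' := by
  funext t' r' θ' φ'
  exact deriv_const_mul_field _

lemma mulk_pth (k : ℝ → ℝ) (u : KF) :
    pth (fun t' r' θ' φ' => ((k r' : ℝ) : ℂ) * u t' r' θ' φ')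
      = fun t' r' θ' φ' => ((k r' : ℝ) : ℂ) * pth u t' r' θ' φ' := by
  funext t' r' θ' φ'
  exact deriv_const_mul_field _

lemma mulk_pth2 (k : ℝ → ℝ) (u : KF) :
    pth (fun t' r' θ' φ' => ((Real.sin θ' : ℝ) : ℂ) * (((k r' : ℝ) : ℂ) * u t' r' θ' φ'))
      = fun t' r' θ' φ' => ((k r' : ℝ) : ℂ) *
          pth (fun t'' r'' θ'' φ'' => ((Real.sin θ'' : ℝ) : ℂ) * u t'' r'' θ'' φ'') t' r' θ' φ' := by
  funext t' r' θ' φ'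
  show deriv (fun θ'' => ((Real.sin θ'' : ℝ) : ℂ) * (((k r' : ℝ) : ℂ) * u t' r' θ'' φ')) θ' = _
  have h : (fun θ'' => ((Real.sin θ'' : ℝ) : ℂ) * (((k r' : ℝ) : ℂ) * u t' r' θ'' φ'))
      = fun θ'' => ((k r' : ℝ) : ℂ) * (((Real.sin θ'' : ℝ) : ℂ) * u t' r' θ'' φ') := by
    funext θ''; ring
  rw [h]
  exact deriv_const_mul_field _

end Aux

set_option maxHeartbeats 1000000 in
/-- **Conjugation identity `𝐓_s = 𝐓̂_s − 2s − 4s(r−M)∂_r`.** -/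
theorem stmt_3 (M a : ℝ) (ha : 0 < |a|) (haM : |a| < M) (s : ℤ) (ψ : KF)
    (hψ : ContDiffOn ℝ (⊤ : ℕ∞) (fun p : ℝ × ℝ × ℝ × ℝ => ψ p.1 p.2.1 p.2.2.1 p.2.2.2) (KerrΩ M a)) :
    ∀ t r θ φ : ℝ,
      M - Real.sqrt (M^2 - a^2) < r → r < M + Real.sqrt (M^2 - a^2) →
      0 < θ → θ < Real.pi →
      Teuk M a s ψ t r θ φ =
        TeukHat M a s ψ t r θ φ - 2 * (s : ℂ) * ψ t r θ φ
          - 4 * (s : ℂ) * ((r - M : ℝ) : ℂ) * pr ψ t r θ φ := by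
  intro t r θ φ h1 h2 h3 h4
  -- basic facts about Δ on the interval
  set I : Set ℝ := Set.Ioo (M - Real.sqrt (M^2 - a^2)) (M + Real.sqrt (M^2 - a^2)) with hIdef
  have hrI : r ∈ I := ⟨h1, h2⟩
  have hMa : (0:ℝ) < M^2 - a^2 := by
    nlinarith [abs_nonneg a, sq_abs a, abs_lt.mp haM, lt_of_lt_of_le ha (le_of_lt haM)]
  have hΔne : ∀ r' ∈ I, Δk M a r' ≠ 0 := by
    intro r' hr'
    have hs : Real.sqrt (M^2 - a^2) ^ 2 = M^2 - a^2 := Real.sq_sqrt hMa.le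
    have h1' := hr'.1; have h2' := hr'.2
    have : (r' - M)^2 < M^2 - a^2 := by
      rw [← hs]
      have hsp : 0 < Real.sqrt (M^2 - a^2) := Real.sqrt_pos.mpr hMa
      apply sq_lt_sq'
      · linarith
      · linarith
    have : Δk M a r' < 0 := by unfold Δk; nlinarith
    linarith
  -- the slice r' ↦ ψ t r' θ φ is smooth on I
  have hmaps : Set.MapsTo (fun r' : ℝ => ((t, r', θ, φ) : ℝ × ℝ × ℝ × ℝ)) I (KerrΩ M a) :=
    fun r' hr' => ⟨hr'.1, hr'.2, h3, h4⟩
  have hι : ContDiff ℝ (⊤ : ℕ∞) (fun r' : ℝ => ((t, r', θ, φ) : ℝ × ℝ × ℝ × ℝ)) :=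
    contDiff_const.prodMk (contDiff_id.prodMk (contDiff_const.prodMk contDiff_const))
  have hg : ContDiffOn ℝ (⊤ : ℕ∞) (fun r' => ψ t r' θ φ) I := by
    have := hψ.comp hι.contDiffOn hmaps
    simpa [Function.comp_def] using this
  have hopen : IsOpen I := isOpen_Ioo
  have hg1 : ∀ r' ∈ I, HasDerivAt (fun r'' => ψ t r'' θ φ) (pr ψ t r' θ φ) r' := by
    intro r' hr'
    exact ((hg.differentiableOn (by simp) r' hr').differentiableAt (hopen.mem_nhds hr')).hasDerivAt
  have hg'cd : ContDiffOn ℝ (⊤ : ℕ∞) (fun r' => pr ψ t r' θ φ) I := by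
    exact ContDiffOn.deriv_of_isOpen (m := (⊤ : ℕ∞)) hg hopen (by simp)
  have hg2 : HasDerivAt (fun r' => pr ψ t r' θ φ) (pr (pr ψ) t r θ φ) r :=
    ((hg'cd.differentiableOn (by simp) r hrI).differentiableAt (hopen.mem_nhds hrI)).hasDerivAt
  -- derivative of Δ
  have hΔd : ∀ r' : ℝ, HasDerivAt (fun x => Δk M a x) (2*r' - 2*M) r' := by
    intro r'
    have h := ((hasDerivAt_pow 2 r').sub ((hasDerivAt_id r').const_mul (2*M))).add_const (a^2)
    have e : (2:ℕ) * r' ^ (2-1) - 2*M*1 = 2*r' - 2*M := by push_cast; ring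
    rw [e] at h
    exact h
  -- derivative of r' ↦ (Δ^n : ℂ)
  have hzp : ∀ (n : ℤ), ∀ r' ∈ I,
      HasDerivAt (fun x => ((Δk M a x ^ n : ℝ) : ℂ))
        ((((n : ℝ) * Δk M a r' ^ (n-1) * (2*r' - 2*M) : ℝ)) : ℂ) r' := by
    intro n r' hr'
    have h := (hasDerivAt_zpow n (Δk M a r') (Or.inl (hΔne r' hr'))).comp r' (hΔd r')
    exact h.ofReal_comp
  -- first derivative of Δ^{-s}ψ in r, on I
  have hprχ : ∀ r' ∈ I,
      pr (fun t'' r'' θ'' φ'' => ((Δk M a r'' ^ (-s) : ℝ) : ℂ) * ψ t'' r'' θ'' φ'') t r' θ φ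
        = ((((-s : ℝ) * Δk M a r' ^ (-s-1) * (2*r' - 2*M) : ℝ)) : ℂ) * ψ t r' θ φ
          + ((Δk M a r' ^ (-s) : ℝ) : ℂ) * pr ψ t r' θ φ := by
    intro r' hr'
    have h := ((hzp (-s) r' hr').mul (hg1 r' hr')).deriv
    simpa [pr, Pi.mul_def] using h
  -- the function inside the outer radial derivative of the conjugated operator
  have hFG : ∀ r' ∈ I,
      ((Δk M a r' ^ (s+1) : ℝ) : ℂ) *
          pr (fun t'' r'' θ'' φ'' => ((Δk M a r'' ^ (-s) : ℝ) : ℂ) * ψ t'' r'' θ'' φ'') t r' θ φ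
        = (((-2*(s:ℝ)*(r' - M) : ℝ)) : ℂ) * ψ t r' θ φ
          + ((Δk M a r' : ℝ) : ℂ) * pr ψ t r' θ φ := by
    intro r' hr'
    rw [hprχ r' hr']
    have hneC : ((Δk M a r' : ℝ) : ℂ) ≠ 0 := by
      exact_mod_cast hΔne r' hr'
    have e1 : ((Δk M a r' : ℝ) : ℂ) ^ (s+1) * ((Δk M a r' : ℝ) : ℂ) ^ (-s-1) = 1 := by
      rw [← zpow_add₀ hneC]
      have : s + 1 + (-s-1) = 0 := by ring
      rw [this, zpow_zero]
    have e2 : ((Δk M a r' : ℝ) : ℂ) ^ (s+1) * ((Δk M a r' : ℝ) : ℂ) ^ (-s)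
        = ((Δk M a r' : ℝ) : ℂ) := by
      rw [← zpow_add₀ hneC]
      have : s + 1 + (-s) = 1 := by ring
      rw [this, zpow_one]
    push_cast [Complex.ofReal_zpow]
    linear_combination ((-(s:ℂ)) * (2*(r':ℂ) - 2*(M:ℂ)) * ψ t r' θ φ) * e1
      + (pr ψ t r' θ φ) * e2
  -- the radial term of the conjugated operator
  have hev : (fun r' => ((Δk M a r' ^ (s+1) : ℝ) : ℂ) *
        pr (fun t'' r'' θ'' φ'' => ((Δk M a r'' ^ (-s) : ℝ) : ℂ) * ψ t'' r'' θ'' φ'') t r' θ φ)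
      =ᶠ[nhds r] fun r' => (((-2*(s:ℝ)*(r' - M) : ℝ)) : ℂ) * ψ t r' θ φ
          + ((Δk M a r' : ℝ) : ℂ) * pr ψ t r' θ φ :=
    Filter.eventuallyEq_of_mem (hopen.mem_nhds hrI) hFG
  have hderG : HasDerivAt (fun r' => (((-2*(s:ℝ)*(r' - M) : ℝ)) : ℂ) * ψ t r' θ φ
          + ((Δk M a r' : ℝ) : ℂ) * pr ψ t r' θ φ)
      ((((-2*(s:ℝ) : ℝ)) : ℂ) * ψ t r θ φ
        + (((-2*(s:ℝ)*(r - M) : ℝ)) : ℂ) * pr ψ t r θ φ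
        + (((2*r - 2*M : ℝ)) : ℂ) * pr ψ t r θ φ
        + ((Δk M a r : ℝ) : ℂ) * pr (pr ψ) t r θ φ) r := by
    have hc : HasDerivAt (fun r' : ℝ => ((-2*(s:ℝ)*(r' - M) : ℝ) : ℂ)) ((-2*(s:ℝ) : ℝ) : ℂ) r := by
      have h := (((hasDerivAt_id r).sub_const M).const_mul (-2*(s:ℝ)))
      have e : -2*(s:ℝ)*1 = -2*(s:ℝ) := by ring
      rw [e] at h
      exact h.ofReal_comp
    have h1 := hc.mul (hg1 r hrI)
    have h2 := ((hΔd r).ofReal_comp).mul hg2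
    have h := h1.add h2
    convert h using 1
    · rfl
    · rfl
    ring
  have hRχ : pr (fun t' r' θ' φ' => ((Δk M a r' ^ (s+1) : ℝ) : ℂ) *
        pr (fun t'' r'' θ'' φ'' => ((Δk M a r'' ^ (-s) : ℝ) : ℂ) * ψ t'' r'' θ'' φ'') t' r' θ' φ')
        t r θ φ
      = (((-2*(s:ℝ) : ℝ)) : ℂ) * ψ t r θ φ
        + (((-2*(s:ℝ)*(r - M) : ℝ)) : ℂ) * pr ψ t r θ φ
        + (((2*r - 2*M : ℝ)) : ℂ) * pr ψ t r θ φ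
        + ((Δk M a r : ℝ) : ℂ) * pr (pr ψ) t r θ φ := by
    show deriv (fun r' => ((Δk M a r' ^ (s+1) : ℝ) : ℂ) *
        pr (fun t'' r'' θ'' φ'' => ((Δk M a r'' ^ (-s) : ℝ) : ℂ) * ψ t'' r'' θ'' φ'') t r' θ φ) r = _
    rw [hev.deriv_eq]
    exact hderG.deriv
  -- the radial term of the original operator
  have hRψ : pr (fun t' r' θ' φ' => ((Δk M a r' ^ (s+1) : ℝ) : ℂ) * pr ψ t' r' θ' φ') t r θ φ
      = (((((s:ℝ)+1) * Δk M a r ^ s * (2*r - 2*M) : ℝ)) : ℂ) * pr ψ t r θ φ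
        + ((Δk M a r ^ (s+1) : ℝ) : ℂ) * pr (pr ψ) t r θ φ := by
    have h := ((hzp (s+1) r hrI).mul hg2).deriv
    have e : (s+1-1 : ℤ) = s := by ring
    rw [e] at h
    have e2 : ((s+1 : ℤ) : ℝ) = (s:ℝ)+1 := by push_cast; ring
    rw [e2] at h
    simpa [pr, Pi.mul_def] using h
  -- now expand everything
  have hneC : ((Δk M a r : ℝ) : ℂ) ≠ 0 := by exact_mod_cast hΔne r hrI
  have hcancel : ((Δk M a r : ℝ) : ℂ) ^ (-s) * ((Δk M a r : ℝ) : ℂ) ^ s = 1 := by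
    rw [← zpow_add₀ hneC]
    simp
  have hWX : ((Δk M a r ^ s : ℝ) : ℂ) * ((Δk M a r ^ (-s) : ℝ) : ℂ) = 1 := by
    push_cast [Complex.ofReal_zpow]
    linear_combination hcancel
  have hA : ((Δk M a r ^ (-s) : ℝ) : ℂ) *
        ((((s:ℝ)+1) * Δk M a r ^ s * (2*r - 2*M) : ℝ) : ℂ)
      = ((s:ℂ)+1) * (2*(r:ℂ) - 2*(M:ℂ)) := by
    push_cast [Complex.ofReal_zpow]
    linear_combination (((s:ℂ)+1) * (2*(r:ℂ) - 2*(M:ℂ))) * hcancel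
  have hB : ((Δk M a r ^ (-s) : ℝ) : ℂ) * ((Δk M a r ^ (s+1) : ℝ) : ℂ)
      = ((Δk M a r : ℝ) : ℂ) := by
    push_cast [Complex.ofReal_zpow]
    rw [← zpow_add₀ hneC]
    have : -s + (s+1) = 1 := by ring
    rw [this, zpow_one]
  have key : ∀ E R : ℂ, E = ((Δk M a r ^ (-s) : ℝ) : ℂ) * R →
      ((Δk M a r ^ s : ℝ) : ℂ) * E = R := by
    intro E R h
    rw [h, ← mul_assoc, hWX, one_mul]
  have hRψ' : ((Δk M a r ^ (-s) : ℝ) : ℂ) *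
        pr (fun t' r' θ' φ' => ((Δk M a r' ^ (s+1) : ℝ) : ℂ) * pr ψ t' r' θ' φ') t r θ φ
      = ((s:ℂ)+1) * (2*(r:ℂ) - 2*(M:ℂ)) * pr ψ t r θ φ
        + ((Δk M a r : ℝ) : ℂ) * pr (pr ψ) t r θ φ := by
    rw [hRψ, mul_add, ← mul_assoc, ← mul_assoc, hA, hB]
  simp only [Teuk, TeukHat, mulk_pt (fun r' => Δk M a r' ^ (-s)) ,
    mulk_pph (fun r' => Δk M a r' ^ (-s)), mulk_pth (fun r' => Δk M a r' ^ (-s)),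
    mulk_pth2 (fun r' => Δk M a r' ^ (-s))]
  rw [hRχ, hRψ']
  apply key
  push_cast
  ring
end
end

section
/- For every smooth ℂ-valued function ψ on Ω, the operators T, Φ and the Carter operator 𝒬_s all commute with both Teukolsky operators: 𝐓_s(Tψ) = T(𝐓_s ψ), 𝐓_s(Φψ) = Φ(𝐓_s ψ), 𝐓_s(𝒬_s ψ) = 𝒬_s(𝐓_s ψ), and likewise 𝐓̂_s(Tψ) = T(𝐓̂_s ψ), 𝐓̂_s(Φψ) = Φ(𝐓̂_s ψ), 𝐓̂_s(𝒬_s ψ) = 𝒬_s(𝐓̂_s ψ), at every point of Ω. -/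
noncomputable section

namespace KC
open scoped ContDiff

abbrev E4 : Type := ℝ × ℝ × ℝ × ℝ

def vt : E4 := (1,0,0,0)
def vr : E4 := (0,1,0,0)
def vth : E4 := (0,0,1,0)
def vph : E4 := (0,0,0,1)

inductive Op where
  | D : E4 → Op
  | M : (E4 → ℂ) → Op

def appO : Op → (E4 → ℂ) → (E4 → ℂ)
  | .D v, G => fun p => fderiv ℝ G p v
  | .M c, G => fun p => c p * G p

variable {U : Set E4} {G H : E4 → ℂ} {p : E4}

theorem inf1 : (1 : WithTop ℕ∞) ≤ ∞ := by
  have : (1 : WithTop ℕ∞) = ((1:ℕ∞) : WithTop ℕ∞) := by norm_cast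
  rw [this]; exact WithTop.coe_le_coe.2 le_top

theorem inf2 : (2 : WithTop ℕ∞) ≤ ∞ := by
  have : (2 : WithTop ℕ∞) = ((2:ℕ∞) : WithTop ℕ∞) := by norm_cast
  rw [this]; exact WithTop.coe_le_coe.2 le_top

theorem infp1 : ∞ + 1 ≤ ∞ := by norm_num

def CD (U : Set E4) (G : E4 → ℂ) : Prop := ContDiffOn ℝ ∞ G U

def Good (U : Set E4) : Op → Prop
  | .D _ => True
  | .M c => CD U c

def Indep (v : E4) (c : E4 → ℂ) : Prop := ∀ (p : E4) (s : ℝ), c (p + s • v) = c p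

def Swap : Op → Op → Prop
  | .D _, .D _ => True
  | .D v, .M c => Indep v c
  | .M c, .D v => Indep v c
  | .M _, .M _ => True

theorem CD.diffAt (hG : CD U G) (hU : IsOpen U) (hp : p ∈ U) :
    DifferentiableAt ℝ G p :=
  (hG.contDiffAt (hU.mem_nhds hp)).differentiableAt (by simp)

theorem CD.fderivCD (hG : CD U G) (hU : IsOpen U) (v : E4) :
    CD U (fun p => fderiv ℝ G p v) :=
  (hG.fderiv_of_isOpen hU infp1).clm_apply contDiffOn_const

theorem appO_good (hU : IsOpen U) {o : Op} (ho : Good U o) (hG : CD U G) :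
    CD U (appO o G) := by
  cases o with
  | D v => exact hG.fderivCD hU v
  | M c => exact ho.mul hG

theorem appO_congr (hU : IsOpen U) (h : ∀ q ∈ U, G q = H q)
    (o : Op) (hp : p ∈ U) : appO o G p = appO o H p := by
  cases o with
  | D v =>
    show fderiv ℝ G p v = fderiv ℝ H p v
    rw [Filter.EventuallyEq.fderiv_eq ((hU.eventually_mem hp).mono h)]
  | M c => simp only [appO, h p hp]

theorem indep_zero (hU : IsOpen U) {c : E4 → ℂ} (hc : CD U c) {v : E4}
    (h : Indep v c) (hp : p ∈ U) : fderiv ℝ c p v = 0 := by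
  have hline : HasDerivAt (fun s : ℝ => p + s • v) v 0 := by
    simpa using ((hasDerivAt_id (0:ℝ)).smul_const v).const_add p
  have h1 : HasDerivAt (fun s : ℝ => c (p + s • v)) (fderiv ℝ c p v) 0 := by
    have := (hc.diffAt hU hp).hasFDerivAt.comp_hasDerivAt_of_eq 0 hline (by simp)
    exact this
  have h2 : HasDerivAt (fun s : ℝ => c (p + s • v)) 0 0 := by
    have : (fun s : ℝ => c (p + s • v)) = fun _ : ℝ => c p := funext fun s => h p s
    rw [this]; exact hasDerivAt_const _ _
  exact h1.unique h2

theorem appO_swap (hU : IsOpen U) {o o' : Op} (ho : Good U o) (ho' : Good U o')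
    (hs : Swap o o') (hG : CD U G) (hp : p ∈ U) :
    appO o (appO o' G) p = appO o' (appO o G) p := by
  cases o with
  | D v =>
    cases o' with
    | D w =>
      show fderiv ℝ (fun q => fderiv ℝ G q w) p v
         = fderiv ℝ (fun q => fderiv ℝ G q v) p w
      have hcd : ContDiffAt ℝ ∞ G p := hG.contDiffAt (hU.mem_nhds hp)
      have hsymm : IsSymmSndFDerivAt ℝ G p := hcd.isSymmSndFDerivAt (by rw [minSmoothness_of_isRCLikeNormedField]; exact inf2)
      have hf' : DifferentiableAt ℝ (fderiv ℝ G) p :=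
        ((hG.fderiv_of_isOpen hU infp1).contDiffAt
          (hU.mem_nhds hp)).differentiableAt (by simp)
      have key : ∀ u u' : E4, fderiv ℝ (fun q => fderiv ℝ G q u) p u'
          = fderiv ℝ (fderiv ℝ G) p u' u := by
        intro u u'
        have he : (fun q => fderiv ℝ G q u)
            = (ContinuousLinearMap.apply ℝ ℂ u) ∘ (fderiv ℝ G) := rfl
        rw [he, fderiv_comp p ((ContinuousLinearMap.apply ℝ ℂ u).differentiableAt) hf']
        simp
      rw [key w v, key v w]
      exact hsymm v w
    | M c =>
      show fderiv ℝ (fun q => c q * G q) p v = c p * fderiv ℝ G p v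
      have hc := CD.diffAt (G := c) ho' hU hp
      have hg := hG.diffAt hU hp
      rw [fderiv_fun_mul hc hg]
      simp [indep_zero hU ho' hs hp]
  | M c =>
    cases o' with
    | D w =>
      show c p * fderiv ℝ G p w = fderiv ℝ (fun q => c q * G q) p w
      have hc := CD.diffAt (G := c) ho hU hp
      have hg := hG.diffAt hU hp
      rw [fderiv_fun_mul hc hg]
      simp [indep_zero hU ho hs hp]
    | M c' => show c p * (c' p * G p) = c' p * (c p * G p); ring

theorem appO_add (hU : IsOpen U) {o : Op}
    (hG : CD U G) (hH : CD U H) (hp : p ∈ U) :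
    appO o (fun q => G q + H q) p = appO o G p + appO o H p := by
  cases o with
  | D v =>
    show fderiv ℝ (fun q => G q + H q) p v = _
    rw [fderiv_fun_add (hG.diffAt hU hp) (hH.diffAt hU hp)]; simp [appO]
  | M c => simp only [appO]; ring

theorem appO_smul (hU : IsOpen U) {o : Op} (c : ℂ)
    (hG : CD U G) (hp : p ∈ U) :
    appO o (fun q => c * G q) p = c * appO o G p := by
  cases o with
  | D v =>
    show fderiv ℝ (fun q => c * G q) p v = _
    rw [fderiv_const_mul (hG.diffAt hU hp) c]; simp [appO]
  | M c' => simp only [appO]; ring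



/-! Words -/

def appW : List Op → (E4 → ℂ) → (E4 → ℂ)
  | [], G => G
  | o :: w, G => appO o (appW w G)

def GoodW (U : Set E4) (w : List Op) : Prop := ∀ o ∈ w, Good U o
def SwapW (w w' : List Op) : Prop := ∀ o ∈ w, ∀ o' ∈ w', Swap o o'

theorem appW_good (hU : IsOpen U) {w : List Op} (hw : GoodW U w) (hG : CD U G) :
    CD U (appW w G) := by
  induction w with
  | nil => exact hG
  | cons o w ih =>
    exact appO_good hU (hw o (by simp)) (ih fun o' ho' => hw o' (by simp [ho']))

theorem appW_congr (hU : IsOpen U) (h : ∀ q ∈ U, G q = H q) (w : List Op) :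
    ∀ q ∈ U, appW w G q = appW w H q := by
  induction w with
  | nil => exact h
  | cons o w ih => exact fun q hq => appO_congr hU ih o hq

theorem appW_add (hU : IsOpen U) {w : List Op} (hw : GoodW U w)
    (hG : CD U G) (hH : CD U H) :
    ∀ q ∈ U, appW w (fun q => G q + H q) q = appW w G q + appW w H q := by
  induction w with
  | nil => intro q _; rfl
  | cons o w ih =>
    intro q hq
    have hw' : GoodW U w := fun o' ho' => hw o' (by simp [ho'])
    calc appO o (appW w fun q => G q + H q) q
        = appO o (fun q => appW w G q + appW w H q) q :=
          appO_congr hU (ih hw') o hq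
      _ = appO o (appW w G) q + appO o (appW w H) q :=
          appO_add hU (appW_good hU hw' hG) (appW_good hU hw' hH) hq
      _ = appW (o :: w) G q + appW (o :: w) H q := rfl

theorem appW_smul (hU : IsOpen U) {w : List Op} (hw : GoodW U w) (c : ℂ)
    (hG : CD U G) :
    ∀ q ∈ U, appW w (fun q => c * G q) q = c * appW w G q := by
  induction w with
  | nil => intro q _; rfl
  | cons o w ih =>
    intro q hq
    have hw' : GoodW U w := fun o' ho' => hw o' (by simp [ho'])
    calc appO o (appW w fun q => c * G q) q
        = appO o (fun q => c * appW w G q) q := appO_congr hU (ih hw') o hq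
      _ = c * appO o (appW w G) q := appO_smul hU c (appW_good hU hw' hG) hq

theorem appO_appW_swap (hU : IsOpen U) {o : Op} {w : List Op}
    (ho : Good U o) (hw : GoodW U w) (hs : ∀ o' ∈ w, Swap o o') (hG : CD U G) :
    ∀ q ∈ U, appO o (appW w G) q = appW w (appO o G) q := by
  induction w with
  | nil => intro q _; rfl
  | cons o' w ih =>
    intro q hq
    have hw' : GoodW U w := fun o'' ho'' => hw o'' (by simp [ho''])
    have ho' : Good U o' := hw o' (by simp)
    calc appO o (appO o' (appW w G)) q
        = appO o' (appO o (appW w G)) q :=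
          appO_swap hU ho ho' (hs o' (by simp)) (appW_good hU hw' hG) hq
      _ = appO o' (appW w (appO o G)) q :=
          appO_congr hU (fun q' hq' =>
            ih hw' (fun o'' ho'' => hs o'' (by simp [ho''])) q' hq') o' hq

theorem appW_appW_swap (hU : IsOpen U) {w w' : List Op}
    (hw : GoodW U w) (hw' : GoodW U w') (hs : SwapW w w') (hG : CD U G) :
    ∀ q ∈ U, appW w (appW w' G) q = appW w' (appW w G) q := by
  induction w with
  | nil => intro q _; rfl
  | cons o w ih =>
    intro q hq
    have hwt : GoodW U w := fun o' ho' => hw o' (by simp [ho'])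
    calc appO o (appW w (appW w' G)) q
        = appO o (appW w' (appW w G)) q :=
          appO_congr hU (ih hwt (fun a ha b hb => hs a (by simp [ha]) b hb)) o hq
      _ = appW w' (appO o (appW w G)) q :=
          appO_appW_swap hU (hw o (by simp)) hw'
            (fun o' ho' => hs o (by simp) o' ho') (appW_good hU hwt hG) q hq

/-! Sums of words with constant coefficients -/

def appS (L : List (ℂ × List Op)) (G : E4 → ℂ) : E4 → ℂ :=
  fun p => (L.map fun cw => cw.1 * appW cw.2 G p).sum

def GoodL (U : Set E4) (L : List (ℂ × List Op)) : Prop := ∀ cw ∈ L, GoodW U cw.2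
def SwapL (L L' : List (ℂ × List Op)) : Prop :=
  ∀ cw ∈ L, ∀ cw' ∈ L', SwapW cw.2 cw'.2

theorem appS_good (hU : IsOpen U) {L : List (ℂ × List Op)} (hL : GoodL U L)
    (hG : CD U G) : CD U (appS L G) := by
  induction L with
  | nil => exact (contDiffOn_const (c := (0:ℂ))).congr fun p _ => by simp [appS]
  | cons cw L ih =>
    have : appS (cw :: L) G = fun p => cw.1 * appW cw.2 G p + appS L G p := by
      funext p; simp [appS]
    rw [this]
    exact (contDiffOn_const.mul (appW_good hU (hL cw (by simp)) hG)).add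
      (ih fun cw' h => hL cw' (by simp [h]))

theorem appS_congr (hU : IsOpen U) (h : ∀ q ∈ U, G q = H q) (L : List (ℂ × List Op)) :
    ∀ q ∈ U, appS L G q = appS L H q := by
  intro q hq
  simp only [appS]
  congr 1
  exact List.map_congr_left fun cw _ => by rw [appW_congr hU h cw.2 q hq]

theorem appW_appS_swap (hU : IsOpen U) {w : List Op} {L : List (ℂ × List Op)}
    (hw : GoodW U w) (hL : GoodL U L) (hs : ∀ cw ∈ L, SwapW w cw.2) (hG : CD U G) :
    ∀ q ∈ U, appW w (appS L G) q = appS L (appW w G) q := by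
  induction L with
  | nil =>
    intro q hq
    have h0 : ∀ q' ∈ U, appS ([] : List (ℂ × List Op)) G q' = (0:ℂ) * G q' := by
      intro q' _; simp [appS]
    calc appW w (appS [] G) q = appW w (fun q' => (0:ℂ) * G q') q :=
          appW_congr hU h0 w q hq
      _ = (0:ℂ) * appW w G q := appW_smul hU hw 0 hG q hq
      _ = appS [] (appW w G) q := by simp [appS]
  | cons cw L ih =>
    intro q hq
    have hLt : GoodL U L := fun cw' h => hL cw' (by simp [h])
    have hcw : GoodW U cw.2 := hL cw (by simp)
    have h1 : ∀ q' ∈ U, appS (cw :: L) G q'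
        = (fun q'' => cw.1 * appW cw.2 G q'') q' + appS L G q' := by
      intro q' _; simp [appS]
    calc appW w (appS (cw :: L) G) q
        = appW w (fun q' => (fun q'' => cw.1 * appW cw.2 G q'') q' + appS L G q') q :=
          appW_congr hU h1 w q hq
      _ = appW w (fun q'' => cw.1 * appW cw.2 G q'') q + appW w (appS L G) q :=
          appW_add hU hw (contDiffOn_const.mul (appW_good hU hcw hG))
            (appS_good hU hLt hG) q hq
      _ = cw.1 * appW w (appW cw.2 G) q + appS L (appW w G) q := by
          rw [appW_smul hU hw cw.1 (appW_good hU hcw hG) q hq,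
            ih hLt (fun cw' h => hs cw' (by simp [h])) q hq]
      _ = cw.1 * appW cw.2 (appW w G) q + appS L (appW w G) q := by
          rw [appW_appW_swap hU hw hcw (hs cw (by simp)) hG q hq]
      _ = appS (cw :: L) (appW w G) q := by simp [appS]


theorem appS_add (hU : IsOpen U) {L : List (ℂ × List Op)} (hL : GoodL U L)
    (hG : CD U G) (hH : CD U H) :
    ∀ q ∈ U, appS L (fun q => G q + H q) q = appS L G q + appS L H q := by
  induction L with
  | nil => intro q _; simp [appS]
  | cons cw L ih =>
    intro q hq
    have hLt : GoodL U L := fun cw' h => hL cw' (by simp [h])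
    simp only [appS, List.map_cons, List.sum_cons]
    have := ih hLt q hq
    simp only [appS] at this
    rw [appW_add hU (hL cw (by simp)) hG hH q hq, this]
    ring

theorem appS_smul (hU : IsOpen U) {L : List (ℂ × List Op)} (hL : GoodL U L) (c : ℂ)
    (hG : CD U G) :
    ∀ q ∈ U, appS L (fun q => c * G q) q = c * appS L G q := by
  induction L with
  | nil => intro q _; simp [appS]
  | cons cw L ih =>
    intro q hq
    have hLt : GoodL U L := fun cw' h => hL cw' (by simp [h])
    simp only [appS, List.map_cons, List.sum_cons]
    have := ih hLt q hq
    simp only [appS] at this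
    rw [appW_smul hU (hL cw (by simp)) c hG q hq, this]
    ring

theorem appS_appS_swap (hU : IsOpen U) {L L' : List (ℂ × List Op)}
    (hL : GoodL U L) (hL' : GoodL U L') (hs : SwapL L L') (hG : CD U G) :
    ∀ q ∈ U, appS L (appS L' G) q = appS L' (appS L G) q := by
  induction L with
  | nil =>
    intro q hq
    have h0 : ∀ q' ∈ U, appS ([] : List (ℂ × List Op)) G q' = (0:ℂ) * G q' := by
      intro q' _; simp [appS]
    calc appS [] (appS L' G) q = 0 := by simp [appS]
      _ = (0:ℂ) * appS L' G q := by ring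
      _ = appS L' (fun q'' => (0:ℂ) * G q'') q := (appS_smul hU hL' 0 hG q hq).symm
      _ = appS L' (appS [] G) q := (appS_congr hU h0 L' q hq).symm
  | cons cw L ih =>
    intro q hq
    have hLt : GoodL U L := fun cw' h => hL cw' (by simp [h])
    have hcw : GoodW U cw.2 := hL cw (by simp)
    calc appS (cw :: L) (appS L' G) q
        = cw.1 * appW cw.2 (appS L' G) q + appS L (appS L' G) q := by
          simp [appS]
      _ = cw.1 * appS L' (appW cw.2 G) q + appS L' (appS L G) q := by
          rw [appW_appS_swap hU hcw hL' (fun cw' h => hs cw (by simp) cw' h) hG q hq,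
            ih hLt (fun a ha b hb => hs a (by simp [ha]) b hb) q hq]
      _ = appS L' (fun q' => cw.1 * appW cw.2 G q') q + appS L' (appS L G) q := by
          rw [appS_smul hU hL' cw.1 (appW_good hU hcw hG) q hq]
      _ = appS L' (fun q' => cw.1 * appW cw.2 G q' + appS L G q') q :=
          (appS_add hU hL' (contDiffOn_const.mul (appW_good hU hcw hG))
            (appS_good hU hLt hG) q hq).symm
      _ = appS L' (appS (cw :: L) G) q :=
          (appS_congr hU (fun q' _ => by simp [appS]) L' q hq).symm


/-! ## Bridging curried operators to the uncurried calculus -/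

def uc (ψ : KF) : E4 → ℂ := fun p => ψ p.1 p.2.1 p.2.2.1 p.2.2.2

def Rp (U : Set E4) (χ : KF) (G : E4 → ℂ) : Prop := CD U G ∧ ∀ p ∈ U, uc χ p = G p

variable {χ : KF}

theorem Rp.cd (h : Rp U χ G) : CD U G := h.1

theorem Rp.pt (hU : IsOpen U) (h : Rp U χ G) : Rp U (_root_.pt χ) (appO (.D vt) G) := by
  refine ⟨appO_good hU trivial h.1, fun p hp => ?_⟩
  have hγ : HasDerivAt (fun x : ℝ => ((x, p.2) : E4)) vt p.1 := by
    have := (hasDerivAt_id p.1).prodMk (hasDerivAt_const p.1 p.2)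
    exact this
  have hev : (fun x : ℝ => χ x p.2.1 p.2.2.1 p.2.2.2) =ᶠ[nhds p.1]
      (fun x => G (x, p.2)) := by
    have hc : ContinuousAt (fun x : ℝ => ((x, p.2) : E4)) p.1 := hγ.continuousAt
    filter_upwards [hc.eventually_mem (hU.mem_nhds hp)] with x hx
    exact h.2 (x, p.2) hx
  show deriv (fun x : ℝ => χ x p.2.1 p.2.2.1 p.2.2.2) p.1 = fderiv ℝ G p vt
  rw [hev.deriv_eq]
  exact ((h.1.diffAt hU hp).hasFDerivAt.comp_hasDerivAt p.1 hγ).deriv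

theorem Rp.pr (hU : IsOpen U) (h : Rp U χ G) : Rp U (_root_.pr χ) (appO (.D vr) G) := by
  refine ⟨appO_good hU trivial h.1, fun p hp => ?_⟩
  have hγ : HasDerivAt (fun x : ℝ => ((p.1, x, p.2.2) : E4)) vr p.2.1 := by
    have := (hasDerivAt_const p.2.1 p.1).prodMk
      ((hasDerivAt_id p.2.1).prodMk (hasDerivAt_const p.2.1 p.2.2))
    exact this
  have hev : (fun x : ℝ => χ p.1 x p.2.2.1 p.2.2.2) =ᶠ[nhds p.2.1]
      (fun x => G (p.1, x, p.2.2)) := by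
    have hc : ContinuousAt (fun x : ℝ => ((p.1, x, p.2.2) : E4)) p.2.1 := hγ.continuousAt
    filter_upwards [hc.eventually_mem (hU.mem_nhds hp)] with x hx
    exact h.2 (p.1, x, p.2.2) hx
  show deriv (fun x : ℝ => χ p.1 x p.2.2.1 p.2.2.2) p.2.1 = fderiv ℝ G p vr
  rw [hev.deriv_eq]
  exact ((h.1.diffAt hU hp).hasFDerivAt.comp_hasDerivAt p.2.1 hγ).deriv

theorem Rp.pth (hU : IsOpen U) (h : Rp U χ G) : Rp U (_root_.pth χ) (appO (.D vth) G) := by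
  refine ⟨appO_good hU trivial h.1, fun p hp => ?_⟩
  have hγ : HasDerivAt (fun x : ℝ => ((p.1, p.2.1, x, p.2.2.2) : E4)) vth p.2.2.1 := by
    have := (hasDerivAt_const p.2.2.1 p.1).prodMk ((hasDerivAt_const p.2.2.1 p.2.1).prodMk
      ((hasDerivAt_id p.2.2.1).prodMk (hasDerivAt_const p.2.2.1 p.2.2.2)))
    simpa [vth, Prod.ext_iff] using this
  have hev : (fun x : ℝ => χ p.1 p.2.1 x p.2.2.2) =ᶠ[nhds p.2.2.1]
      (fun x => G (p.1, p.2.1, x, p.2.2.2)) := by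
    have hc : ContinuousAt (fun x : ℝ => ((p.1, p.2.1, x, p.2.2.2) : E4)) p.2.2.1 :=
      hγ.continuousAt
    filter_upwards [hc.eventually_mem (hU.mem_nhds hp)] with x hx
    exact h.2 (p.1, p.2.1, x, p.2.2.2) hx
  show deriv (fun x : ℝ => χ p.1 p.2.1 x p.2.2.2) p.2.2.1 = fderiv ℝ G p vth
  rw [hev.deriv_eq]
  exact ((h.1.diffAt hU hp).hasFDerivAt.comp_hasDerivAt p.2.2.1 hγ).deriv

theorem Rp.pph (hU : IsOpen U) (h : Rp U χ G) : Rp U (_root_.pph χ) (appO (.D vph) G) := by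
  refine ⟨appO_good hU trivial h.1, fun p hp => ?_⟩
  have hγ : HasDerivAt (fun x : ℝ => ((p.1, p.2.1, p.2.2.1, x) : E4)) vph p.2.2.2 := by
    have := (hasDerivAt_const p.2.2.2 p.1).prodMk ((hasDerivAt_const p.2.2.2 p.2.1).prodMk
      ((hasDerivAt_const p.2.2.2 p.2.2.1).prodMk (hasDerivAt_id p.2.2.2)))
    simpa [vph, Prod.ext_iff] using this
  have hev : (fun x : ℝ => χ p.1 p.2.1 p.2.2.1 x) =ᶠ[nhds p.2.2.2]
      (fun x => G (p.1, p.2.1, p.2.2.1, x)) := by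
    have hc : ContinuousAt (fun x : ℝ => ((p.1, p.2.1, p.2.2.1, x) : E4)) p.2.2.2 :=
      hγ.continuousAt
    filter_upwards [hc.eventually_mem (hU.mem_nhds hp)] with x hx
    exact h.2 (p.1, p.2.1, p.2.2.1, x) hx
  show deriv (fun x : ℝ => χ p.1 p.2.1 p.2.2.1 x) p.2.2.2 = fderiv ℝ G p vph
  rw [hev.deriv_eq]
  exact ((h.1.diffAt hU hp).hasFDerivAt.comp_hasDerivAt p.2.2.2 hγ).deriv

theorem Rp.mul (hU : IsOpen U) {c : E4 → ℂ} (hc : CD U c) (h : Rp U χ G) :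
    Rp U (fun t r θ φ => c (t, r, θ, φ) * χ t r θ φ) (appO (.M c) G) := by
  refine ⟨appO_good hU (by exact hc) h.1, fun p hp => ?_⟩
  show c (p.1, p.2.1, p.2.2.1, p.2.2.2) * χ p.1 p.2.1 p.2.2.1 p.2.2.2 = c p * G p
  rw [← h.2 p hp]
  rfl

/-! ## Concrete coefficient multiplication operators -/

def oMR (f : ℝ → ℝ) : Op := .M (fun q : E4 => ((f q.2.1 : ℝ) : ℂ))
def oMT (f : ℝ → ℝ) : Op := .M (fun q : E4 => ((f q.2.2.1 : ℝ) : ℂ))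

theorem indep_rcoeff (f : ℝ → ℝ) {v : E4} (hv : v.2.1 = 0) :
    Indep v (fun q : E4 => ((f q.2.1 : ℝ) : ℂ)) := by
  intro p t
  have h : (p + t • v).2.1 = p.2.1 := by simp [hv]
  show ((f (p + t • v).2.1 : ℝ) : ℂ) = ((f p.2.1 : ℝ) : ℂ)
  rw [h]

theorem indep_tcoeff (f : ℝ → ℝ) {v : E4} (hv : v.2.2.1 = 0) :
    Indep v (fun q : E4 => ((f q.2.2.1 : ℝ) : ℂ)) := by
  intro p t
  have h : (p + t • v).2.2.1 = p.2.2.1 := by simp [hv]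
  show ((f (p + t • v).2.2.1 : ℝ) : ℂ) = ((f p.2.2.1 : ℝ) : ℂ)
  rw [h]

def Aop : Op → Prop
  | .D v => v.2.2.1 = 0
  | .M c => ∀ v : E4, v.2.1 = 0 → Indep v c

def Bop : Op → Prop
  | .D v => v.2.1 = 0
  | .M c => ∀ v : E4, v.2.2.1 = 0 → Indep v c

theorem swap_AB {o o' : Op} (hA : Aop o) (hB : Bop o') : Swap o o' := by
  cases o with
  | D v =>
    cases o' with
    | D w => trivial
    | M c => exact hB v hA
  | M c =>
    cases o' with
    | D w => exact hA w hB
    | M c' => trivial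

theorem swap_BA {o o' : Op} (hB : Bop o) (hA : Aop o') : Swap o o' := by
  cases o with
  | D v =>
    cases o' with
    | D w => trivial
    | M c => exact hA v hB
  | M c =>
    cases o' with
    | D w => exact hB w hA
    | M c' => trivial

theorem aop_oMR (f : ℝ → ℝ) : Aop (oMR f) := fun v hv => indep_rcoeff f hv
theorem bop_oMT (f : ℝ → ℝ) : Bop (oMT f) := fun v hv => indep_tcoeff f hv

/-! ## Smoothness of coefficients -/

attribute [local fun_prop] Real.contDiff_cos Real.contDiff_sin

@[fun_prop] theorem contDiff_Δk (M a : ℝ) {n : WithTop ℕ∞} : ContDiff ℝ n (Δk M a) := by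
  unfold Δk; fun_prop

theorem contDiffAt_zpowR (m : ℤ) {x : ℝ} (hx : x ≠ 0) :
    ContDiffAt ℝ ∞ (fun y : ℝ => y ^ m) x := by
  cases m with
  | ofNat n => simpa using (contDiff_id.pow n (𝕜 := ℝ)).contDiffAt (x := x)
  | negSucc n =>
    have he : (fun y : ℝ => y ^ (Int.negSucc n)) = fun y : ℝ => (y ^ (n+1))⁻¹ := by
      funext y; rw [zpow_negSucc]
    rw [he]
    exact (contDiffAt_inv ℝ (pow_ne_zero _ hx)).comp x (contDiff_id.pow (n+1)).contDiffAt

theorem cdR {f : ℝ → ℝ} (hf : ∀ q ∈ U, ContDiffAt ℝ ∞ f q.2.1) :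
    CD U (fun q : E4 => ((f q.2.1 : ℝ) : ℂ)) := fun q hq =>
  ((Complex.ofRealCLM.contDiff.contDiffAt).comp _
    ((hf q hq).comp q ((contDiff_fst.comp contDiff_snd).contDiffAt))).contDiffWithinAt

theorem cdT {f : ℝ → ℝ} (hf : ∀ q ∈ U, ContDiffAt ℝ ∞ f q.2.2.1) :
    CD U (fun q : E4 => ((f q.2.2.1 : ℝ) : ℂ)) := fun q hq =>
  ((Complex.ofRealCLM.contDiff.contDiffAt).comp _
    ((hf q hq).comp q
      ((contDiff_fst.comp (contDiff_snd.comp contDiff_snd)).contDiffAt))).contDiffWithinAt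

theorem cd_zpow (M a : ℝ) (m : ℤ) (hΔ : ∀ q ∈ U, Δk M a q.2.1 ≠ 0) :
    CD U (fun q : E4 => ((Δk M a q.2.1 ^ m : ℝ) : ℂ)) :=
  cdR fun q hq => (contDiffAt_zpowR m (hΔ q hq)).comp q.2.1 (contDiff_Δk M a).contDiffAt

/-! ## The radial and angular (Carter) operator lists -/

def RL (M a : ℝ) (s : ℤ) : List (ℂ × List Op) :=
  [ (-1, [oMR (fun r => (r^2+a^2)^2/Δk M a r), .D vt, .D vt]),
    (-1, [oMR (fun r => 4*M*a*r/Δk M a r), .D vt, .D vph]),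
    (-1, [oMR (fun r => a^2/Δk M a r), .D vph, .D vph]),
    (1,  [oMR (fun r => Δk M a r ^ (-s)), .D vr, oMR (fun r => Δk M a r ^ (s+1)), .D vr]),
    (2*(s:ℂ), [oMR (fun r => a*(r-M)/Δk M a r), .D vph]),
    (2*(s:ℂ), [oMR (fun r => M*(r^2-a^2)/Δk M a r - r), .D vt]) ]

def QL (a : ℝ) (s : ℤ) : List (ℂ × List Op) :=
  [ ((1:ℂ), [oMT (fun θ => a^2*(Real.sin θ)^2), .D vt, .D vt]),
    (-2*Complex.I*(a:ℂ)*(s:ℂ), [oMT Real.cos, .D vt]),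
    ((1:ℂ), [oMT (fun θ => 1/Real.sin θ), .D vth, oMT Real.sin, .D vth]),
    ((1:ℂ), [oMT (fun θ => 1/(Real.sin θ)^2), .D vph, .D vph]),
    (2*Complex.I*(s:ℂ), [oMT (fun θ => Real.cos θ/(Real.sin θ)^2), .D vph]),
    (-1, [oMT (fun θ => (s:ℝ)^2*(Real.cos θ/Real.sin θ)^2 + (s:ℝ))]) ]

def TR (M a : ℝ) (s : ℤ) (G : E4 → ℂ) : E4 → ℂ := fun p =>
  (appS (RL M a s) G p + appS (QL a s) G p) + 2*(s:ℂ)*G p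

def TkR (M a : ℝ) (s : ℤ) (G : E4 → ℂ) : E4 → ℂ :=
  appO (oMR (fun r => Δk M a r ^ s)) (TR M a s (appO (oMR (fun r => Δk M a r ^ (-s))) G))

theorem goodRL (hΔ : ∀ q ∈ U, Δk M a q.2.1 ≠ 0) : GoodL U (RL M a s) := by
  have h1 : CD U (fun q : E4 => (((q.2.1^2+a^2)^2/Δk M a q.2.1 : ℝ) : ℂ)) :=
    cdR (f := fun r => (r^2+a^2)^2/Δk M a r) fun q hq => by have := hΔ q hq; fun_prop (disch := assumption)
  have h2 : CD U (fun q : E4 => ((4*M*a*q.2.1/Δk M a q.2.1 : ℝ) : ℂ)) :=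
    cdR (f := fun r => 4*M*a*r/Δk M a r) fun q hq => by have := hΔ q hq; fun_prop (disch := assumption)
  have h3 : CD U (fun q : E4 => ((a^2/Δk M a q.2.1 : ℝ) : ℂ)) :=
    cdR (f := fun r => a^2/Δk M a r) fun q hq => by have := hΔ q hq; fun_prop (disch := assumption)
  have h4 := cd_zpow M a (-s) hΔ
  have h5 := cd_zpow M a (s+1) hΔ
  have h6 : CD U (fun q : E4 => ((a*(q.2.1-M)/Δk M a q.2.1 : ℝ) : ℂ)) :=
    cdR (f := fun r => a*(r-M)/Δk M a r) fun q hq => by have := hΔ q hq; fun_prop (disch := assumption)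
  have h7 : CD U (fun q : E4 => ((M*(q.2.1^2-a^2)/Δk M a q.2.1 - q.2.1 : ℝ) : ℂ)) :=
    cdR (f := fun r => M*(r^2-a^2)/Δk M a r - r) fun q hq => by have := hΔ q hq; fun_prop (disch := assumption)
  intro cw hcw
  fin_cases hcw <;> intro o ho <;> fin_cases ho <;>
    first
      | trivial
      | exact h1 | exact h2 | exact h3 | exact h4 | exact h5 | exact h6 | exact h7

theorem goodQL (hsin : ∀ q ∈ U, Real.sin q.2.2.1 ≠ 0) : GoodL U (QL a s) := by
  have h1 : CD U (fun q : E4 => ((a^2*(Real.sin q.2.2.1)^2 : ℝ) : ℂ)) :=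
    cdT (f := fun θ => a^2*(Real.sin θ)^2) fun q hq => by fun_prop
  have h2 : CD U (fun q : E4 => ((Real.cos q.2.2.1 : ℝ) : ℂ)) :=
    cdT (f := Real.cos) fun q hq => by fun_prop
  have h3 : CD U (fun q : E4 => ((1/Real.sin q.2.2.1 : ℝ) : ℂ)) :=
    cdT (f := fun θ => 1/Real.sin θ) fun q hq => by have h := hsin q hq; have h2 := pow_ne_zero 2 h; fun_prop (disch := assumption)
  have h4 : CD U (fun q : E4 => ((Real.sin q.2.2.1 : ℝ) : ℂ)) :=
    cdT (f := Real.sin) fun q hq => by fun_prop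
  have h5 : CD U (fun q : E4 => ((1/(Real.sin q.2.2.1)^2 : ℝ) : ℂ)) :=
    cdT (f := fun θ => 1/(Real.sin θ)^2) fun q hq => by have h := hsin q hq; have h2 := pow_ne_zero 2 h; fun_prop (disch := assumption)
  have h6 : CD U (fun q : E4 => ((Real.cos q.2.2.1/(Real.sin q.2.2.1)^2 : ℝ) : ℂ)) :=
    cdT (f := fun θ => Real.cos θ/(Real.sin θ)^2) fun q hq => by have h := hsin q hq; have h2 := pow_ne_zero 2 h; fun_prop (disch := assumption)
  have h7 : CD U (fun q : E4 => (((s:ℝ)^2*(Real.cos q.2.2.1/Real.sin q.2.2.1)^2 + (s:ℝ) : ℝ) : ℂ)) :=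
    cdT (f := fun θ => (s:ℝ)^2*(Real.cos θ/Real.sin θ)^2 + (s:ℝ)) fun q hq => by have h := hsin q hq; have h2 := pow_ne_zero 2 h; fun_prop (disch := assumption)
  intro cw hcw
  fin_cases hcw <;> intro o ho <;> fin_cases ho <;>
    first
      | trivial
      | exact h1 | exact h2 | exact h3 | exact h4 | exact h5 | exact h6 | exact h7

theorem aopRL : ∀ cw ∈ RL M a s, ∀ o ∈ cw.2, Aop o := by
  intro cw hcw
  fin_cases hcw <;> intro o ho <;> fin_cases ho <;>
    first
      | exact aop_oMR _
      | rfl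

theorem bopQL : ∀ cw ∈ QL a s, ∀ o ∈ cw.2, Bop o := by
  intro cw hcw
  fin_cases hcw <;> intro o ho <;> fin_cases ho <;>
    first
      | exact bop_oMT _
      | rfl

/-! ## Representation of the Carter operator -/

theorem Rp.carter (hU : IsOpen U) (hsin : ∀ q ∈ U, Real.sin q.2.2.1 ≠ 0)
    {a : ℝ} {s : ℤ} {χ : KF} {G : E4 → ℂ} (h : Rp U χ G) :
    Rp U (Qop a s χ) (appS (QL a s) G) := by
  refine ⟨appS_good hU (goodQL hsin) h.1, fun p hp => ?_⟩
  have hpt := h.pt hU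
  have hptt := hpt.pt hU
  have hph := h.pph hU
  have hphph := hph.pph hU
  have hsinCD : CD U (fun q : E4 => ((Real.sin q.2.2.1 : ℝ) : ℂ)) :=
    cdT (f := Real.sin) fun q hq => by fun_prop
  have hin : Rp U (fun t' r' θ' φ' => ((Real.sin θ' : ℝ) : ℂ) * _root_.pth χ t' r' θ' φ')
      (appO (.M (fun q : E4 => ((Real.sin q.2.2.1 : ℝ) : ℂ))) (appO (.D vth) G)) :=
    (h.pth hU).mul hU hsinCD
  have hout := hin.pth hU
  have e1 : _root_.pt (_root_.pt χ) p.1 p.2.1 p.2.2.1 p.2.2.2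
      = appO (.D vt) (appO (.D vt) G) p := hptt.2 p hp
  have e2 : _root_.pt χ p.1 p.2.1 p.2.2.1 p.2.2.2 = appO (.D vt) G p := hpt.2 p hp
  have e3 : _root_.pth (fun t' r' θ' φ' => ((Real.sin θ' : ℝ) : ℂ) * _root_.pth χ t' r' θ' φ')
        p.1 p.2.1 p.2.2.1 p.2.2.2
      = appO (.D vth) (appO (.M (fun q : E4 => ((Real.sin q.2.2.1 : ℝ) : ℂ)))
          (appO (.D vth) G)) p := hout.2 p hp
  have e4 : _root_.pph (_root_.pph χ) p.1 p.2.1 p.2.2.1 p.2.2.2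
      = appO (.D vph) (appO (.D vph) G) p := hphph.2 p hp
  have e5 : _root_.pph χ p.1 p.2.1 p.2.2.1 p.2.2.2 = appO (.D vph) G p := hph.2 p hp
  have e0 : χ p.1 p.2.1 p.2.2.1 p.2.2.2 = G p := h.2 p hp
  show Qop a s χ p.1 p.2.1 p.2.2.1 p.2.2.2 = appS (QL a s) G p
  simp only [Qop]
  rw [e1, e2, e3, e4, e5, e0]
  simp only [appS, QL, appW, appO, oMT, List.map_cons, List.map_nil, List.sum_cons,
    List.sum_nil]
  push_cast
  ring

/-! ## Representation of the Teukolsky operator -/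

theorem cd_TR {M a : ℝ} {s : ℤ} (hU : IsOpen U) (hΔ : ∀ q ∈ U, Δk M a q.2.1 ≠ 0)
    (hsin : ∀ q ∈ U, Real.sin q.2.2.1 ≠ 0) {G : E4 → ℂ} (hG : CD U G) :
    CD U (TR M a s G) :=
  ((appS_good hU (goodRL hΔ) hG).add (appS_good hU (goodQL hsin) hG)).add
    (contDiffOn_const.mul hG)

theorem Rp.teuhat (hU : IsOpen U) {M a : ℝ} {s : ℤ}
    (hΔ : ∀ q ∈ U, Δk M a q.2.1 ≠ 0) (hsin : ∀ q ∈ U, Real.sin q.2.2.1 ≠ 0)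
    {χ : KF} {G : E4 → ℂ} (h : Rp U χ G) :
    Rp U (TeukHat M a s χ) (TR M a s G) := by
  refine ⟨cd_TR hU hΔ hsin h.1, fun p hp => ?_⟩
  have hpt := h.pt hU
  have hptt := hpt.pt hU
  have hph := h.pph hU
  have hphph := hph.pph hU
  have htph := hph.pt hU
  have hsinCD : CD U (fun q : E4 => ((Real.sin q.2.2.1 : ℝ) : ℂ)) :=
    cdT (f := Real.sin) fun q hq => by fun_prop
  have hinth : Rp U (fun t' r' θ' φ' => ((Real.sin θ' : ℝ) : ℂ) * _root_.pth χ t' r' θ' φ')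
      (appO (.M (fun q : E4 => ((Real.sin q.2.2.1 : ℝ) : ℂ))) (appO (.D vth) G)) :=
    (h.pth hU).mul hU hsinCD
  have houtth := hinth.pth hU
  have hinr : Rp U
      (fun t' r' θ' φ' => ((Δk M a r' ^ (s+1) : ℝ) : ℂ) * _root_.pr χ t' r' θ' φ')
      (appO (.M (fun q : E4 => ((Δk M a q.2.1 ^ (s+1) : ℝ) : ℂ))) (appO (.D vr) G)) :=
    (h.pr hU).mul hU (cd_zpow M a (s+1) hΔ)
  have houtr := hinr.pr hU
  have e1 : _root_.pt (_root_.pt χ) p.1 p.2.1 p.2.2.1 p.2.2.2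
      = appO (.D vt) (appO (.D vt) G) p := hptt.2 p hp
  have e2 : _root_.pt (_root_.pph χ) p.1 p.2.1 p.2.2.1 p.2.2.2
      = appO (.D vt) (appO (.D vph) G) p := htph.2 p hp
  have e3 : _root_.pph (_root_.pph χ) p.1 p.2.1 p.2.2.1 p.2.2.2
      = appO (.D vph) (appO (.D vph) G) p := hphph.2 p hp
  have e4 : _root_.pr (fun t' r' θ' φ' => ((Δk M a r' ^ (s+1) : ℝ) : ℂ)
        * _root_.pr χ t' r' θ' φ') p.1 p.2.1 p.2.2.1 p.2.2.2
      = appO (.D vr) (appO (.M (fun q : E4 => ((Δk M a q.2.1 ^ (s+1) : ℝ) : ℂ)))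
          (appO (.D vr) G)) p := houtr.2 p hp
  have e5 : _root_.pth (fun t' r' θ' φ' => ((Real.sin θ' : ℝ) : ℂ)
        * _root_.pth χ t' r' θ' φ') p.1 p.2.1 p.2.2.1 p.2.2.2
      = appO (.D vth) (appO (.M (fun q : E4 => ((Real.sin q.2.2.1 : ℝ) : ℂ)))
          (appO (.D vth) G)) p := houtth.2 p hp
  have e6 : _root_.pph χ p.1 p.2.1 p.2.2.1 p.2.2.2 = appO (.D vph) G p := hph.2 p hp
  have e7 : _root_.pt χ p.1 p.2.1 p.2.2.1 p.2.2.2 = appO (.D vt) G p := hpt.2 p hp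
  have e0 : χ p.1 p.2.1 p.2.2.1 p.2.2.2 = G p := h.2 p hp
  show TeukHat M a s χ p.1 p.2.1 p.2.2.1 p.2.2.2 = TR M a s G p
  have hΔp := hΔ p hp
  have hsp := hsin p hp
  have hsp2 : Real.sin p.2.2.1 ^ 2 ≠ 0 := pow_ne_zero _ hsp
  simp only [TeukHat]
  rw [e1, e2, e3, e4, e5, e6, e7, e0]
  simp only [TR, appS, RL, QL, appW, appO, oMR, oMT, List.map_cons, List.map_nil,
    List.sum_cons, List.sum_nil]
  push_cast
  field_simp
  ring

theorem Rp.teuk (hU : IsOpen U) {M a : ℝ} {s : ℤ}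
    (hΔ : ∀ q ∈ U, Δk M a q.2.1 ≠ 0) (hsin : ∀ q ∈ U, Real.sin q.2.2.1 ≠ 0)
    {χ : KF} {G : E4 → ℂ} (h : Rp U χ G) :
    Rp U (Teuk M a s χ) (TkR M a s G) := by
  have hinner : Rp U (fun t' r' θ' φ' => ((Δk M a r' ^ (-s) : ℝ) : ℂ) * χ t' r' θ' φ')
      (appO (.M (fun q : E4 => ((Δk M a q.2.1 ^ (-s) : ℝ) : ℂ))) G) :=
    h.mul hU (cd_zpow M a (-s) hΔ)
  have hT := hinner.teuhat (M := M) (a := a) (s := s) hU hΔ hsin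
  refine ⟨appO_good hU (show Good U (oMR fun r => Δk M a r ^ s) from cd_zpow M a s hΔ)
    hT.1, fun p hp => ?_⟩
  show Teuk M a s χ p.1 p.2.1 p.2.2.1 p.2.2.2 = TkR M a s G p
  simp only [Teuk]
  have eT : TeukHat M a s (fun t' r' θ' φ' => ((Δk M a r' ^ (-s) : ℝ) : ℂ) * χ t' r' θ' φ')
        p.1 p.2.1 p.2.2.1 p.2.2.2
      = TR M a s (appO (.M (fun q : E4 => ((Δk M a q.2.1 ^ (-s) : ℝ) : ℂ))) G) p :=
    hT.2 p hp
  rw [eT]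
  rfl

/-! ## Commutation -/

theorem TR_congr {M a : ℝ} {s : ℤ} (hU : IsOpen U) {H₁ H₂ : E4 → ℂ}
    (h : ∀ q ∈ U, H₁ q = H₂ q) : ∀ q ∈ U, TR M a s H₁ q = TR M a s H₂ q := by
  intro q hq
  simp only [TR]
  rw [appS_congr hU h (RL M a s) q hq, appS_congr hU h (QL a s) q hq, h q hq]

theorem TR_comm {M a : ℝ} {s : ℤ} {L : List (ℂ × List Op)} (hU : IsOpen U)
    (hΔ : ∀ q ∈ U, Δk M a q.2.1 ≠ 0) (hsin : ∀ q ∈ U, Real.sin q.2.2.1 ≠ 0)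
    (hLg : GoodL U L) (hLB : ∀ cw ∈ L, ∀ o ∈ cw.2, Bop o)
    (hmid : ∀ H : E4 → ℂ, CD U H →
      ∀ q ∈ U, appS L (appS (QL a s) H) q = appS (QL a s) (appS L H) q)
    {G : E4 → ℂ} (hG : CD U G) :
    ∀ q ∈ U, appS L (TR M a s G) q = TR M a s (appS L G) q := by
  intro q hq
  have hR := appS_good hU (goodRL (M := M) (a := a) (s := s) hΔ) hG
  have hQ := appS_good hU (goodQL (a := a) (s := s) hsin) hG
  have hswapR : SwapL L (RL M a s) := fun cw hcw cw' hcw' o ho o' ho' =>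
    swap_BA (hLB cw hcw o ho) (aopRL cw' hcw' o' ho')
  calc appS L (TR M a s G) q
      = appS L (fun p => (fun p' => appS (RL M a s) G p' + appS (QL a s) G p') p
          + (fun p' => 2*(s:ℂ)*G p') p) q := rfl
    _ = appS L (fun p' => appS (RL M a s) G p' + appS (QL a s) G p') q
        + appS L (fun p' => 2*(s:ℂ)*G p') q :=
        appS_add hU hLg (hR.add hQ) (contDiffOn_const.mul hG) q hq
    _ = (appS L (appS (RL M a s) G) q + appS L (appS (QL a s) G) q)
        + 2*(s:ℂ) * appS L G q := by
        rw [appS_add hU hLg hR hQ q hq, appS_smul hU hLg (2*(s:ℂ)) hG q hq]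
    _ = (appS (RL M a s) (appS L G) q + appS (QL a s) (appS L G) q)
        + 2*(s:ℂ) * appS L G q := by
        rw [appS_appS_swap hU hLg (goodRL hΔ) hswapR hG q hq, hmid G hG q hq]
    _ = TR M a s (appS L G) q := rfl

theorem TkR_comm {M a : ℝ} {s : ℤ} {L : List (ℂ × List Op)} (hU : IsOpen U)
    (hΔ : ∀ q ∈ U, Δk M a q.2.1 ≠ 0) (hsin : ∀ q ∈ U, Real.sin q.2.2.1 ≠ 0)
    (hLg : GoodL U L) (hLB : ∀ cw ∈ L, ∀ o ∈ cw.2, Bop o)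
    (hmid : ∀ H : E4 → ℂ, CD U H →
      ∀ q ∈ U, appS L (appS (QL a s) H) q = appS (QL a s) (appS L H) q)
    {G : E4 → ℂ} (hG : CD U G) :
    ∀ q ∈ U, appS L (TkR M a s G) q = TkR M a s (appS L G) q := by
  intro q hq
  have h8 : Good U (oMR fun r => Δk M a r ^ s) := cd_zpow M a s hΔ
  have h4 : Good U (oMR fun r => Δk M a r ^ (-s)) := cd_zpow M a (-s) hΔ
  have hG4 : CD U (appO (oMR fun r => Δk M a r ^ (-s)) G) := appO_good hU h4 hG
  have hsw8 : ∀ cw ∈ L, SwapW [oMR fun r => Δk M a r ^ s] cw.2 := by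
    intro cw hcw o ho o' ho'
    have : o = oMR fun r => Δk M a r ^ s := by simpa using ho
    rw [this]
    exact swap_AB (aop_oMR _) (hLB cw hcw o' ho')
  have hsw4 : ∀ cw ∈ L, SwapW [oMR fun r => Δk M a r ^ (-s)] cw.2 := by
    intro cw hcw o ho o' ho'
    have : o = oMR fun r => Δk M a r ^ (-s) := by simpa using ho
    rw [this]
    exact swap_AB (aop_oMR _) (hLB cw hcw o' ho')
  have hgw8 : GoodW U [oMR fun r => Δk M a r ^ s] := by
    intro o ho; have : o = oMR fun r => Δk M a r ^ s := by simpa using ho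
    rw [this]; exact h8
  have hgw4 : GoodW U [oMR fun r => Δk M a r ^ (-s)] := by
    intro o ho; have : o = oMR fun r => Δk M a r ^ (-s) := by simpa using ho
    rw [this]; exact h4
  calc appS L (TkR M a s G) q
      = appS L (appW [oMR fun r => Δk M a r ^ s]
          (TR M a s (appO (oMR fun r => Δk M a r ^ (-s)) G))) q := rfl
    _ = appW [oMR fun r => Δk M a r ^ s]
          (appS L (TR M a s (appO (oMR fun r => Δk M a r ^ (-s)) G))) q :=
        (appW_appS_swap hU hgw8 hLg hsw8 (cd_TR hU hΔ hsin hG4) q hq).symm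
    _ = appO (oMR fun r => Δk M a r ^ s)
          (appS L (TR M a s (appO (oMR fun r => Δk M a r ^ (-s)) G))) q := rfl
    _ = appO (oMR fun r => Δk M a r ^ s)
          (TR M a s (appS L (appO (oMR fun r => Δk M a r ^ (-s)) G))) q :=
        appO_congr hU (TR_comm hU hΔ hsin hLg hLB hmid hG4) _ hq
    _ = appO (oMR fun r => Δk M a r ^ s)
          (TR M a s (appO (oMR fun r => Δk M a r ^ (-s)) (appS L G))) q := by
        refine appO_congr hU (TR_congr hU ?_) _ hq
        intro q' hq'
        have := appW_appS_swap hU hgw4 hLg hsw4 hG q' hq'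
        simpa [appW] using this.symm
    _ = TkR M a s (appS L G) q := rfl

/-! ## Single-derivative lists -/

def Lsingle (v : E4) : List (ℂ × List Op) := [((1:ℂ), [Op.D v])]

theorem goodLsingle {v : E4} : GoodL U (Lsingle v) := by
  intro cw hcw
  fin_cases hcw
  intro o ho
  fin_cases ho
  trivial

theorem bopLsingle {v : E4} (hv : v.2.1 = 0) :
    ∀ cw ∈ Lsingle v, ∀ o ∈ cw.2, Bop o := by
  intro cw hcw
  fin_cases hcw
  intro o ho
  fin_cases ho
  exact hv

theorem appS_Lsingle (v : E4) (H : E4 → ℂ) : appS (Lsingle v) H = appO (.D v) H := by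
  funext q; simp [appS, appW, Lsingle]

theorem swapLsingleQL {a : ℝ} {s : ℤ} {v : E4} (hv2 : v.2.2.1 = 0) :
    SwapL (Lsingle v) (QL a s) := by
  intro cw hcw cw' hcw' o ho o' ho'
  fin_cases hcw
  have : o = Op.D v := by simpa using ho
  rw [this]
  exact swap_AB (show Aop (Op.D v) from hv2) (bopQL cw' hcw' o' ho')

/-! ## Kerr geometry facts -/

theorem isOpen_kerr (M a : ℝ) : IsOpen (KerrΩ M a) := by
  have c1 : Continuous (fun p : E4 => p.2.1) := by fun_prop
  have c2 : Continuous (fun p : E4 => p.2.2.1) := by fun_prop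
  have he : KerrΩ M a = ({p : E4 | M - Real.sqrt (M^2-a^2) < p.2.1}
      ∩ {p : E4 | p.2.1 < M + Real.sqrt (M^2-a^2)})
      ∩ ({p : E4 | 0 < p.2.2.1} ∩ {p : E4 | p.2.2.1 < Real.pi}) := by
    ext p; simp [KerrΩ, Set.mem_setOf_eq]; tauto
  rw [he]
  exact ((isOpen_lt continuous_const c1).inter (isOpen_lt c1 continuous_const)).inter
    ((isOpen_lt continuous_const c2).inter (isOpen_lt c2 continuous_const))

theorem delta_ne (M a : ℝ) (ha : 0 < |a|) (haM : |a| < M) :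
    ∀ q ∈ KerrΩ M a, Δk M a q.2.1 ≠ 0 := by
  intro q hq
  obtain ⟨h1, h2, -, -⟩ := hq
  have h0 : 0 ≤ M^2 - a^2 := by nlinarith [abs_nonneg a, sq_abs a]
  have hs2 : Real.sqrt (M^2-a^2) ^ 2 = M^2 - a^2 := Real.sq_sqrt h0
  have hlt : Δk M a q.2.1 < 0 := by
    unfold Δk
    nlinarith [mul_pos (by linarith : (0:ℝ) < M + Real.sqrt (M^2-a^2) - q.2.1)
      (by linarith : (0:ℝ) < q.2.1 - (M - Real.sqrt (M^2-a^2)))]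
  exact ne_of_lt hlt

theorem sin_ne (M a : ℝ) : ∀ q ∈ KerrΩ M a, Real.sin q.2.2.1 ≠ 0 := fun _ hq =>
  ne_of_gt (Real.sin_pos_of_pos_of_lt_pi hq.2.2.1 hq.2.2.2)

end KC

set_option maxHeartbeats 2000000 in
open KC in
/-- **`T`, `Φ` and the Carter operator commute with both Teukolsky operators.** -/
theorem stmt_8 (M a : ℝ) (ha : 0 < |a|) (haM : |a| < M) (s : ℤ) (ψ : KF)
    (hψ : ContDiffOn ℝ (⊤ : ℕ∞) (fun p : ℝ × ℝ × ℝ × ℝ => ψ p.1 p.2.1 p.2.2.1 p.2.2.2) (KerrΩ M a)) :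
    ∀ t r θ φ : ℝ,
      M - Real.sqrt (M^2 - a^2) < r → r < M + Real.sqrt (M^2 - a^2) →
      0 < θ → θ < Real.pi →
      Teuk M a s (pt ψ) t r θ φ = pt (Teuk M a s ψ) t r θ φ ∧
      Teuk M a s (pph ψ) t r θ φ = pph (Teuk M a s ψ) t r θ φ ∧
      Teuk M a s (Qop a s ψ) t r θ φ = Qop a s (Teuk M a s ψ) t r θ φ ∧
      TeukHat M a s (pt ψ) t r θ φ = pt (TeukHat M a s ψ) t r θ φ ∧
      TeukHat M a s (pph ψ) t r θ φ = pph (TeukHat M a s ψ) t r θ φ ∧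
      TeukHat M a s (Qop a s ψ) t r θ φ = Qop a s (TeukHat M a s ψ) t r θ φ := by
  intro t r θ φ hr1 hr2 hθ1 hθ2
  have hU : IsOpen (KerrΩ M a) := isOpen_kerr M a
  have hΔ := delta_ne M a ha haM
  have hsin := sin_ne M a
  have hp : ((t, r, θ, φ) : E4) ∈ KerrΩ M a := ⟨hr1, hr2, hθ1, hθ2⟩
  have hG : CD (KerrΩ M a) (uc ψ) := hψ.of_le (by simp)
  have hrep : Rp (KerrΩ M a) ψ (uc ψ) := ⟨hG, fun _ _ => rfl⟩
  have hmidQ : ∀ H : E4 → ℂ, CD (KerrΩ M a) H → ∀ q ∈ KerrΩ M a,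
      appS (QL a s) (appS (QL a s) H) q = appS (QL a s) (appS (QL a s) H) q :=
    fun _ _ _ _ => rfl
  have hmidt : ∀ H : E4 → ℂ, CD (KerrΩ M a) H → ∀ q ∈ KerrΩ M a,
      appS (Lsingle vt) (appS (QL a s) H) q = appS (QL a s) (appS (Lsingle vt) H) q :=
    fun H hH => appS_appS_swap hU goodLsingle (goodQL hsin)
      (swapLsingleQL (v := vt) rfl) hH
  have hmidp : ∀ H : E4 → ℂ, CD (KerrΩ M a) H → ∀ q ∈ KerrΩ M a,
      appS (Lsingle vph) (appS (QL a s) H) q = appS (QL a s) (appS (Lsingle vph) H) q :=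
    fun H hH => appS_appS_swap hU goodLsingle (goodQL hsin)
      (swapLsingleQL (v := vph) rfl) hH
  refine ⟨?_, ?_, ?_, ?_, ?_, ?_⟩
  · calc Teuk M a s (pt ψ) t r θ φ
        = TkR M a s (appO (.D vt) (uc ψ)) ((t,r,θ,φ) : E4) :=
          ((hrep.pt hU).teuk hU hΔ hsin).2 ((t,r,θ,φ) : E4) hp
      _ = TkR M a s (appS (Lsingle vt) (uc ψ)) ((t,r,θ,φ) : E4) := by
          rw [appS_Lsingle]
      _ = appS (Lsingle vt) (TkR M a s (uc ψ)) ((t,r,θ,φ) : E4) :=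
          (TkR_comm hU hΔ hsin goodLsingle (bopLsingle rfl) hmidt hG ((t,r,θ,φ) : E4) hp).symm
      _ = appO (.D vt) (TkR M a s (uc ψ)) ((t,r,θ,φ) : E4) := by
          rw [appS_Lsingle]
      _ = pt (Teuk M a s ψ) t r θ φ :=
          (((hrep.teuk hU hΔ hsin).pt hU).2 ((t,r,θ,φ) : E4) hp).symm
  · calc Teuk M a s (pph ψ) t r θ φ
        = TkR M a s (appO (.D vph) (uc ψ)) ((t,r,θ,φ) : E4) :=
          ((hrep.pph hU).teuk hU hΔ hsin).2 ((t,r,θ,φ) : E4) hp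
      _ = TkR M a s (appS (Lsingle vph) (uc ψ)) ((t,r,θ,φ) : E4) := by
          rw [appS_Lsingle]
      _ = appS (Lsingle vph) (TkR M a s (uc ψ)) ((t,r,θ,φ) : E4) :=
          (TkR_comm hU hΔ hsin goodLsingle (bopLsingle rfl) hmidp hG ((t,r,θ,φ) : E4) hp).symm
      _ = appO (.D vph) (TkR M a s (uc ψ)) ((t,r,θ,φ) : E4) := by
          rw [appS_Lsingle]
      _ = pph (Teuk M a s ψ) t r θ φ :=
          (((hrep.teuk hU hΔ hsin).pph hU).2 ((t,r,θ,φ) : E4) hp).symm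
  · calc Teuk M a s (Qop a s ψ) t r θ φ
        = TkR M a s (appS (QL a s) (uc ψ)) ((t,r,θ,φ) : E4) :=
          ((hrep.carter hU hsin).teuk hU hΔ hsin).2 ((t,r,θ,φ) : E4) hp
      _ = appS (QL a s) (TkR M a s (uc ψ)) ((t,r,θ,φ) : E4) :=
          (TkR_comm hU hΔ hsin (goodQL hsin) bopQL hmidQ hG ((t,r,θ,φ) : E4) hp).symm
      _ = Qop a s (Teuk M a s ψ) t r θ φ :=
          (((hrep.teuk hU hΔ hsin).carter hU hsin).2 ((t,r,θ,φ) : E4) hp).symm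
  · calc TeukHat M a s (pt ψ) t r θ φ
        = TR M a s (appO (.D vt) (uc ψ)) ((t,r,θ,φ) : E4) :=
          ((hrep.pt hU).teuhat hU hΔ hsin).2 ((t,r,θ,φ) : E4) hp
      _ = TR M a s (appS (Lsingle vt) (uc ψ)) ((t,r,θ,φ) : E4) := by
          rw [appS_Lsingle]
      _ = appS (Lsingle vt) (TR M a s (uc ψ)) ((t,r,θ,φ) : E4) :=
          (TR_comm hU hΔ hsin goodLsingle (bopLsingle rfl) hmidt hG ((t,r,θ,φ) : E4) hp).symm
      _ = appO (.D vt) (TR M a s (uc ψ)) ((t,r,θ,φ) : E4) := by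
          rw [appS_Lsingle]
      _ = pt (TeukHat M a s ψ) t r θ φ :=
          (((hrep.teuhat hU hΔ hsin).pt hU).2 ((t,r,θ,φ) : E4) hp).symm
  · calc TeukHat M a s (pph ψ) t r θ φ
        = TR M a s (appO (.D vph) (uc ψ)) ((t,r,θ,φ) : E4) :=
          ((hrep.pph hU).teuhat hU hΔ hsin).2 ((t,r,θ,φ) : E4) hp
      _ = TR M a s (appS (Lsingle vph) (uc ψ)) ((t,r,θ,φ) : E4) := by
          rw [appS_Lsingle]
      _ = appS (Lsingle vph) (TR M a s (uc ψ)) ((t,r,θ,φ) : E4) :=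
          (TR_comm hU hΔ hsin goodLsingle (bopLsingle rfl) hmidp hG ((t,r,θ,φ) : E4) hp).symm
      _ = appO (.D vph) (TR M a s (uc ψ)) ((t,r,θ,φ) : E4) := by
          rw [appS_Lsingle]
      _ = pph (TeukHat M a s ψ) t r θ φ :=
          (((hrep.teuhat hU hΔ hsin).pph hU).2 ((t,r,θ,φ) : E4) hp).symm
  · calc TeukHat M a s (Qop a s ψ) t r θ φ
        = TR M a s (appS (QL a s) (uc ψ)) ((t,r,θ,φ) : E4) :=
          ((hrep.carter hU hsin).teuhat hU hΔ hsin).2 ((t,r,θ,φ) : E4) hp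
      _ = appS (QL a s) (TR M a s (uc ψ)) ((t,r,θ,φ) : E4) :=
          (TR_comm hU hΔ hsin (goodQL hsin) bopQL hmidQ hG ((t,r,θ,φ) : E4) hp).symm
      _ = Qop a s (TeukHat M a s ψ) t r θ φ :=
          (((hrep.teuhat hU hΔ hsin).carter hU hsin).2 ((t,r,θ,φ) : E4) hp).symm
end
end
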